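/- arXiv:2012.13079 — 7 statements merged into one kernel-verified Lean document; each statement's English description precedes it below -/
import Mathlib

section
/- Let α ∈ [0,1) and let C_{n+2} be the cycle on n+2 vertices. With φ(H_n) as above (determinant of the n×n tridiagonal matrix with diagonal entries λ−2α and off-diagonal entries α−1), the A_α-characteristic polynomial of the cycle satisfies φ(C_{n+2}) = (λ−2α)·φ(H_{n+1}) − 2(α−1)^2·φ(H_n) + 2(−1)^{n+1}(α−1)^{n+2} for all n ≥ 1. -/
open Matrix

/-- `λ I - A_α(P_n)` for the path `P_n`: tridiagonal, diagonal `λ-2α` except the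
two end entries `λ-α`, off-diagonal entries `α-1`. -/
noncomputable def Pmat (α lam : ℝ) (n : ℕ) : Matrix (Fin n) (Fin n) ℝ :=
  Matrix.of fun i j =>
    if i = j then (if i.val = 0 ∨ i.val = n - 1 then lam - α else lam - 2*α)
    else if i.val + 1 = j.val ∨ j.val + 1 = i.val then α - 1 else 0

/-- `B_n`: obtained from `λ I - A_α(P_{n+1})` by deleting the row/column of one end
vertex: tridiagonal with diagonal `λ-2α` except the last entry `λ-α`. -/
noncomputable def Bmat (α lam : ℝ) (n : ℕ) : Matrix (Fin n) (Fin n) ℝ :=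
  Matrix.of fun i j =>
    if i = j then (if i.val = n - 1 then lam - α else lam - 2*α)
    else if i.val + 1 = j.val ∨ j.val + 1 = i.val then α - 1 else 0

/-- `H_n`: tridiagonal with all diagonal entries `λ-2α`, off-diagonal `α-1`. -/
noncomputable def Hmat (α lam : ℝ) (n : ℕ) : Matrix (Fin n) (Fin n) ℝ :=
  Matrix.of fun i j =>
    if i = j then lam - 2*α
    else if i.val + 1 = j.val ∨ j.val + 1 = i.val then α - 1 else 0

noncomputable def phiP (α lam : ℝ) (n : ℕ) : ℝ :=
  if n = 0 then (1 - 2*α)/(1-α)^2 else (Pmat α lam n).det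

noncomputable def phiB (α lam : ℝ) (n : ℕ) : ℝ :=
  if n = 0 then 1 else (Bmat α lam n).det

noncomputable def phiH (α lam : ℝ) (n : ℕ) : ℝ :=
  if n = 0 then 1 else (Hmat α lam n).det

/-- `λ I - A_α(C_m)` for the cycle `C_m` (`m ≥ 3`): diagonal `λ-2α`, entry `α-1`
between cyclically consecutive vertices. -/
noncomputable def Cmat (α lam : ℝ) (m : ℕ) : Matrix (Fin m) (Fin m) ℝ :=
  Matrix.of fun i j =>
    if i = j then lam - 2*α
    else if (i.val + 1) % m = j.val ∨ (j.val + 1) % m = i.val then α - 1 else 0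

/-!
Expand `det (λI - A_α(C_{n+2}))` along the first row, whose only nonzero entries are `λ-2α`,
`α-1`, `α-1` in columns `0`, `1` and `n+1`. The first minor is `H_{n+1}`. Each of the other two
has first column `(α-1, 0, …, 0, α-1)`; expanding along it produces a copy of `H_n` and a
triangular matrix with diagonal `α-1`, and collecting terms gives the formula.
-/

lemma Fin.val_succAbove_eq_ite {n : ℕ} (p : Fin (n + 1)) (i : Fin n) :
    (p.succAbove i : ℕ) = if (i : ℕ) < p then (i : ℕ) else (i : ℕ) + 1 := by
  rcases lt_or_ge (i : ℕ) p with h | h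
  · rw [Fin.succAbove_of_castSucc_lt _ _ (Fin.lt_def.2 h), if_pos h, Fin.val_castSucc]
  · rw [Fin.succAbove_of_le_castSucc _ _ (Fin.le_def.2 h), if_neg (by omega), Fin.val_succ]

namespace Matrix

variable {R : Type*} [CommRing R] {n : ℕ}

theorem det_succ_row_zero_of_support (A : Matrix (Fin (n + 1)) (Fin (n + 1)) R)
    (s : Finset (Fin (n + 1))) (hs : ∀ j ∉ s, A 0 j = 0) :
    A.det = ∑ j ∈ s, (-1) ^ (j : ℕ) * A 0 j * (A.submatrix Fin.succ j.succAbove).det := by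
  rw [det_succ_row_zero]
  exact (Finset.sum_subset (Finset.subset_univ s) fun j _ hj => by simp [hs j hj]).symm

theorem det_succ_column_zero_of_support (A : Matrix (Fin (n + 1)) (Fin (n + 1)) R)
    (s : Finset (Fin (n + 1))) (hs : ∀ i ∉ s, A i 0 = 0) :
    A.det = ∑ i ∈ s, (-1) ^ (i : ℕ) * A i 0 * (A.submatrix i.succAbove Fin.succ).det := by
  rw [det_succ_column_zero]
  exact (Finset.sum_subset (Finset.subset_univ s) fun i _ hi => by simp [hs i hi]).symm

theorem det_of_isUpperTriangular_of_diag_eq {A : Matrix (Fin n) (Fin n) R}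
    (hA : A.IsUpperTriangular) {c : R} (hc : ∀ i, A i i = c) : A.det = c ^ n := by
  simp [det_of_isUpperTriangular hA, hc]

theorem det_of_isLowerTriangular_of_diag_eq {A : Matrix (Fin n) (Fin n) R}
    (hA : A.IsLowerTriangular) {c : R} (hc : ∀ i, A i i = c) : A.det = c ^ n := by
  simp [det_of_isLowerTriangular A hA, hc]

end Matrix

section CycleMinors

variable (α lam : ℝ)

lemma Cmat_apply (n : ℕ) (i j : Fin (n + 2)) :
    Cmat α lam (n + 2) i j =
      if (i : ℕ) = (j : ℕ) then lam - 2 * α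
      else if (i : ℕ) + 1 = j ∨ (j : ℕ) + 1 = i ∨ ((i : ℕ) = n + 1 ∧ (j : ℕ) = 0) ∨
          ((j : ℕ) = n + 1 ∧ (i : ℕ) = 0) then α - 1 else 0 := by
  have succ_mod (k : Fin (n + 2)) :
      ((k : ℕ) + 1) % (n + 2) = if (k : ℕ) = n + 1 then 0 else (k : ℕ) + 1 := by
    split_ifs with h
    · rw [h, Nat.mod_self]
    · exact Nat.mod_eq_of_lt (by omega)
  simp only [Cmat, of_apply, Fin.ext_iff, succ_mod]
  grind

lemma Hmat_apply (n : ℕ) (i j : Fin n) :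
    Hmat α lam n i j = if (i : ℕ) = j then lam - 2 * α
      else if (i : ℕ) + 1 = j ∨ (j : ℕ) + 1 = i then α - 1 else 0 := by
  simp only [Hmat, of_apply, Fin.ext_iff]

lemma Cmat_submatrix_succ_succ (n : ℕ) :
    (Cmat α lam (n + 2)).submatrix Fin.succ Fin.succ = Hmat α lam (n + 1) := by
  ext i j
  simp only [submatrix_apply, Cmat_apply, Hmat_apply, Fin.val_succ]
  grind

lemma det_Cmat_submatrix_succ_one {n : ℕ} (hn : n ≠ 0) :
    ((Cmat α lam (n + 2)).submatrix Fin.succ (1 : Fin (n + 2)).succAbove).det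
      = (α - 1) * (Hmat α lam n).det + (-1) ^ n * (α - 1) ^ (n + 1) := by
  set M := (Cmat α lam (n + 2)).submatrix Fin.succ (1 : Fin (n + 2)).succAbove
  have hcol : ∀ i ∉ ({0, Fin.last n} : Finset _), M i 0 = 0 := by
    intro i hi
    simp only [Finset.mem_insert, Finset.mem_singleton, Fin.ext_iff, Fin.val_zero,
      Fin.val_last] at hi
    simp only [M, submatrix_apply, Cmat_apply, Fin.val_succAbove_eq_ite, Fin.val_succ,
      Fin.val_zero, Fin.val_one]
    grind
  have h00 : M 0 0 = α - 1 := by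
    simp only [M, submatrix_apply, Cmat_apply, Fin.val_succAbove_eq_ite, Fin.val_succ,
      Fin.val_zero, Fin.val_one]
    grind
  have hl0 : M (Fin.last n) 0 = α - 1 := by
    simp only [M, submatrix_apply, Cmat_apply, Fin.val_succAbove_eq_ite, Fin.val_succ,
      Fin.val_last, Fin.val_zero, Fin.val_one]
    grind
  have hH : M.submatrix Fin.succ Fin.succ = Hmat α lam n := by
    ext i j
    simp only [M, submatrix_apply, Cmat_apply, Hmat_apply, Fin.val_succAbove_eq_ite,
      Fin.val_succ, Fin.val_one]
    grind
  have htri : (M.submatrix (Fin.last n).succAbove Fin.succ).IsLowerTriangular := by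
    intro i j hij
    rw [OrderDual.toDual_lt_toDual, Fin.lt_def] at hij
    simp only [M, submatrix_apply, Cmat_apply, Fin.val_succAbove_eq_ite, Fin.val_succ,
      Fin.val_last, Fin.val_one]
    grind
  have hdiag : ∀ i, M.submatrix (Fin.last n).succAbove Fin.succ i i = α - 1 := by
    intro i
    simp only [M, submatrix_apply, Cmat_apply, Fin.val_succAbove_eq_ite, Fin.val_succ,
      Fin.val_last, Fin.val_one]
    grind
  rw [det_succ_column_zero_of_support M _ hcol, Finset.sum_pair (by simp [Fin.ext_iff, Ne.symm hn]),
    Fin.succAbove_zero, hH, det_of_isLowerTriangular_of_diag_eq htri hdiag, h00, hl0]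
  simp only [Fin.val_zero, Fin.val_last]
  ring

lemma det_Cmat_submatrix_succ_last {n : ℕ} (hn : n ≠ 0) :
    ((Cmat α lam (n + 2)).submatrix Fin.succ (Fin.last (n + 1)).succAbove).det
      = (α - 1) ^ (n + 1) + (-1) ^ n * (α - 1) * (Hmat α lam n).det := by
  set M := (Cmat α lam (n + 2)).submatrix Fin.succ (Fin.last (n + 1)).succAbove
  have hcol : ∀ i ∉ ({0, Fin.last n} : Finset _), M i 0 = 0 := by
    intro i hi
    simp only [Finset.mem_insert, Finset.mem_singleton, Fin.ext_iff, Fin.val_zero,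
      Fin.val_last] at hi
    simp only [M, submatrix_apply, Cmat_apply, Fin.val_succAbove_eq_ite, Fin.val_succ,
      Fin.val_zero, Fin.val_last]
    grind
  have h00 : M 0 0 = α - 1 := by
    simp only [M, submatrix_apply, Cmat_apply, Fin.val_succAbove_eq_ite, Fin.val_succ,
      Fin.val_zero, Fin.val_last]
    grind
  have hl0 : M (Fin.last n) 0 = α - 1 := by
    simp only [M, submatrix_apply, Cmat_apply, Fin.val_succAbove_eq_ite, Fin.val_succ,
      Fin.val_zero, Fin.val_last]
    grind
  have htri : (M.submatrix Fin.succ Fin.succ).IsUpperTriangular := by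
    intro i j hij
    rw [id, id, Fin.lt_def] at hij
    simp only [M, submatrix_apply, Cmat_apply, Fin.val_succAbove_eq_ite, Fin.val_succ,
      Fin.val_last]
    grind
  have hdiag : ∀ i, M.submatrix Fin.succ Fin.succ i i = α - 1 := by
    intro i
    simp only [M, submatrix_apply, Cmat_apply, Fin.val_succAbove_eq_ite, Fin.val_succ,
      Fin.val_last]
    grind
  have hH : M.submatrix (Fin.last n).succAbove Fin.succ = Hmat α lam n := by
    ext i j
    simp only [M, submatrix_apply, Cmat_apply, Hmat_apply, Fin.val_succAbove_eq_ite,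
      Fin.val_succ, Fin.val_last]
    grind
  rw [det_succ_column_zero_of_support M _ hcol, Finset.sum_pair (by simp [Fin.ext_iff, Ne.symm hn]),
    Fin.succAbove_zero, hH, det_of_isUpperTriangular_of_diag_eq htri hdiag, h00, hl0]
  simp only [Fin.val_zero, Fin.val_last]
  ring

end CycleMinors

theorem stmt4_general (α : ℝ) :
    ∀ (lam : ℝ) (n : ℕ), 1 ≤ n →
      (Cmat α lam (n+2)).det
        = (lam - 2*α) * phiH α lam (n+1) - 2*(α-1)^2 * phiH α lam n
          + 2*(-1)^(n+1)*(α-1)^(n+2) := by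
  intro lam n hn
  have hrow : ∀ j ∉ ({0, 1, Fin.last (n + 1)} : Finset _), Cmat α lam (n + 2) 0 j = 0 := by
    intro j hj
    simp only [Finset.mem_insert, Finset.mem_singleton, Fin.ext_iff, Fin.val_zero, Fin.val_one,
      Fin.val_last] at hj
    simp only [Cmat_apply, Fin.val_zero]
    grind
  have h01 : Cmat α lam (n + 2) 0 1 = α - 1 := by
    simp only [Cmat_apply, Fin.val_zero, Fin.val_one]
    grind
  have h0l : Cmat α lam (n + 2) 0 (Fin.last (n + 1)) = α - 1 := by
    simp only [Cmat_apply, Fin.val_zero, Fin.val_last]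
    grind
  have hsign : ((-1 : ℝ) ^ n) ^ 2 = 1 := by rw [← pow_mul, pow_mul', neg_one_sq, one_pow]
  rw [det_succ_row_zero_of_support _ _ hrow, Finset.sum_insert (by simp [Fin.ext_iff]),
    Finset.sum_pair (by simp [Fin.ext_iff]; omega), Fin.succAbove_zero, Cmat_submatrix_succ_succ,
    det_Cmat_submatrix_succ_one α lam (by omega), det_Cmat_submatrix_succ_last α lam (by omega),
    h01, h0l, phiH, phiH, if_neg (by omega), if_neg (by omega)]
  simp only [Cmat_apply, Fin.val_zero, Fin.val_one, Fin.val_last, if_true, pow_zero, pow_one]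
  linear_combination (-(α - 1) ^ 2 * (Hmat α lam n).det) * hsign

theorem stmt4 (α : ℝ) (hα : α ∈ Set.Ico (0:ℝ) 1) :
    ∀ (lam : ℝ) (n : ℕ), 1 ≤ n →
      (Cmat α lam (n+2)).det
        = (lam - 2*α) * phiH α lam (n+1) - 2*(α-1)^2 * phiH α lam n
          + 2*(-1)^(n+1)*(α-1)^(n+2) :=
  stmt4_general α
end

section
/- Fix α ∈ [0,1) and a real λ > 2 with λ not a root of any φ(P_n). With φ(P_n) and φ(B_n) defined as above, and h(λ)_α = (λ − Δ)/(2α(λ−2) + 2) where Δ = √((λ−4α+2)(λ−2)), the limit lim_{n→∞} φ(B_{n−1})/φ(P_n) exists and equals h(λ)_α. -/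
open Matrix

/-!
Expanding along the first row, `φ(B_n)` satisfies `φ(B_{n+2}) = (λ-2α) φ(B_{n+1}) - (1-α)² φ(B_n)`,
whose characteristic roots are `s > t > 0`; so `φ(B_n)` is dominated by its `s^n` term and
`φ(B_n) / φ(B_{n+1}) → 1/s`. The same expansion gives
`φ(P_{n+2}) = (λ-α) φ(B_{n+1}) - (1-α)² φ(B_n)`, hence
`φ(P_{n+2}) / φ(B_{n+1}) → λ - α - (1-α)²/s = λ - α - t = (λ+Δ)/2`, and
`2/(λ+Δ) = (λ-Δ)/(2α(λ-2)+2)` because `λ² - Δ² = 2(2α(λ-2)+2)`.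
-/

namespace Matrix

variable {R : Type*} [CommRing R]

def tridiag (d : ℕ → R) (b : R) (n : ℕ) : Matrix (Fin n) (Fin n) R :=
  of fun i j => if i = j then d i else if (i : ℕ) + 1 = j ∨ (j : ℕ) + 1 = i then b else 0

theorem tridiag_congr {d d' : ℕ → R} {n : ℕ} (h : ∀ k < n, d k = d' k) (b : R) :
    tridiag d b n = tridiag d' b n := by
  ext i j
  simp only [tridiag, of_apply, h i i.isLt]

theorem tridiag_submatrix_succ (d : ℕ → R) (b : R) (n : ℕ) :
    (tridiag d b (n + 1)).submatrix Fin.succ Fin.succ = tridiag (fun k => d (k + 1)) b n := by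
  ext i j
  simp [tridiag, Fin.ext_iff]

theorem det_tridiag_minor_zero_one (d : ℕ → R) (b : R) (n : ℕ) :
    ((tridiag d b (n + 2)).submatrix Fin.succ (Fin.succAbove 1)).det =
      b * (tridiag (fun k => d (k + 2)) b n).det := by
  rw [det_succ_column_zero, Fin.sum_univ_succ, Finset.sum_eq_zero fun i _ => ?_]
  · have hminor : ((tridiag d b (n + 2)).submatrix Fin.succ (Fin.succAbove 1)).submatrix
        Fin.succ Fin.succ = tridiag (fun k => d (k + 2)) b n := by
      ext i j
      simp [tridiag, Fin.ext_iff]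
    rw [Fin.succAbove_zero, hminor]
    simp [tridiag]
  · simp [tridiag, Fin.ext_iff]

theorem det_tridiag_add_two (d : ℕ → R) (b : R) (n : ℕ) :
    (tridiag d b (n + 2)).det =
      d 0 * (tridiag (fun k => d (k + 1)) b (n + 1)).det
        - b ^ 2 * (tridiag (fun k => d (k + 2)) b n).det := by
  rw [det_succ_row_zero, Fin.sum_univ_succ, Fin.sum_univ_succ,
    Finset.sum_eq_zero fun j _ => ?_]
  · rw [Fin.succAbove_zero, tridiag_submatrix_succ, Fin.succ_zero_eq_one,
      det_tridiag_minor_zero_one]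
    have h00 : tridiag d b (n + 2) 0 0 = d 0 := by simp [tridiag]
    have h01 : tridiag d b (n + 2) 0 1 = b := by simp [tridiag]
    rw [h00, h01, Fin.val_zero, Fin.val_one]
    ring
  · simp [tridiag, Fin.ext_iff]

end Matrix

open Filter Topology

section LinearRecurrence

theorem eq_mul_pow_add_mul_pow_of_rec {R : Type*} [CommRing R] {u : ℕ → R} {p q s t A B : R}
    (hs : s ^ 2 = p * s - q) (ht : t ^ 2 = p * t - q)
    (hrec : ∀ n, u (n + 2) = p * u (n + 1) - q * u n)
    (h0 : u 0 = A + B) (h1 : u 1 = A * s + B * t) (n : ℕ) :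
    u n = A * s ^ n + B * t ^ n := by
  induction n using Nat.twoStepInduction with
  | zero => simpa using h0
  | one => simpa using h1
  | more n ih0 ih1 =>
    rw [hrec, ih0, ih1]
    linear_combination -(A * s ^ n) * hs - (B * t ^ n) * ht

variable {𝕜 : Type*} [NormedField 𝕜]

theorem tendsto_div_pow_of_eq_mul_pow_add_mul_pow {u : ℕ → 𝕜} {s t A B : 𝕜} (hts : ‖t‖ < ‖s‖)
    (hu : ∀ n, u n = A * s ^ n + B * t ^ n) :
    Tendsto (fun n => u n / s ^ n) atTop (𝓝 A) := by
  have hs : s ≠ 0 := norm_pos_iff.1 ((norm_nonneg t).trans_lt hts)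
  have hgeom : Tendsto (fun n => (t / s) ^ n) atTop (𝓝 0) :=
    tendsto_pow_atTop_nhds_zero_of_norm_lt_one (by rwa [norm_div, div_lt_one (by simpa)])
  convert (hgeom.const_mul B).const_add A using 2 with n
  · rw [hu, div_pow]
    field_simp
  · simp

theorem tendsto_div_succ_of_tendsto_div_pow {u : ℕ → 𝕜} {s A : 𝕜} (hs : s ≠ 0) (hA : A ≠ 0)
    (h : Tendsto (fun n => u n / s ^ n) atTop (𝓝 A)) :
    Tendsto (fun n => u n / u (n + 1)) atTop (𝓝 s⁻¹) := by
  have hsucc := ((tendsto_add_atTop_iff_nat 1).2 h).mul_const s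
  convert h.div hsucc (mul_ne_zero hA hs) using 2 with n
  · have hshift : u (n + 1) / s ^ (n + 1) * s = u (n + 1) / s ^ n := by
      rw [pow_succ]
      field_simp
    rw [Pi.div_apply, hshift, div_div_div_cancel_right₀ (pow_ne_zero n hs)]
  · rw [div_mul_cancel_left₀ hA]

end LinearRecurrence

section Path

variable (α lam : ℝ)

theorem Bmat_eq_tridiag {n : ℕ} {d : ℕ → ℝ}
    (hd : ∀ k < n, d k = if k = n - 1 then lam - α else lam - 2 * α) :
    Bmat α lam n = tridiag d (α - 1) n :=
  tridiag_congr (fun k hk => (hd k hk).symm) _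

theorem Pmat_eq_tridiag (n : ℕ) :
    Pmat α lam n =
      tridiag (fun k => if k = 0 ∨ k = n - 1 then lam - α else lam - 2 * α) (α - 1) n := rfl

theorem phiB_eq_det (n : ℕ) : phiB α lam n = (Bmat α lam n).det := by
  cases n <;> simp [phiB]

theorem phiB_zero : phiB α lam 0 = 1 := by simp [phiB]

theorem phiB_one : phiB α lam 1 = lam - α := by
  simp [phiB_eq_det, Bmat]

theorem phiB_add_two (n : ℕ) :
    phiB α lam (n + 2) = (lam - 2 * α) * phiB α lam (n + 1) - (1 - α) ^ 2 * phiB α lam n := by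
  rw [phiB_eq_det, Bmat_eq_tridiag α lam fun k _ => rfl, det_tridiag_add_two,
    ← Bmat_eq_tridiag (n := n + 1), ← Bmat_eq_tridiag (n := n), ← phiB_eq_det, ← phiB_eq_det]
  · rw [if_neg (by omega)]
    ring
  all_goals intro k hk; exact if_congr (by omega) rfl rfl

theorem phiP_add_two (n : ℕ) :
    phiP α lam (n + 2) = (lam - α) * phiB α lam (n + 1) - (1 - α) ^ 2 * phiB α lam n := by
  rw [phiP, if_neg (by omega), Pmat_eq_tridiag,
    det_tridiag_add_two, ← Bmat_eq_tridiag (n := n + 1), ← Bmat_eq_tridiag (n := n),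
    ← phiB_eq_det, ← phiB_eq_det]
  · rw [if_pos (Or.inl rfl)]
    ring
  all_goals intro k hk; exact if_congr (by omega) rfl rfl

end Path

section Spectral

variable {α lam Δ : ℝ}

theorem phiB_eq_mul_pow_add_mul_pow (hΔ : Δ ^ 2 = (lam - 4 * α + 2) * (lam - 2)) (hΔ0 : Δ ≠ 0)
    (n : ℕ) :
    phiB α lam n = (lam + Δ) / (2 * Δ) * ((lam - 2 * α + Δ) / 2) ^ n
      + (Δ - lam) / (2 * Δ) * ((lam - 2 * α - Δ) / 2) ^ n :=
  eq_mul_pow_add_mul_pow_of_rec (by linear_combination hΔ / 4) (by linear_combination hΔ / 4)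
    (phiB_add_two α lam) (by rw [phiB_zero]; field_simp; ring)
    (by rw [phiB_one]; field_simp; ring) n

theorem tendsto_phiP_div_phiB (hα : α < 1) (hlam : 2 < lam)
    (hΔ : Δ ^ 2 = (lam - 4 * α + 2) * (lam - 2)) (hΔ0 : 0 < Δ) :
    Tendsto (fun n => phiP α lam (n + 2) / phiB α lam (n + 1)) atTop (𝓝 ((lam + Δ) / 2)) := by
  set s := (lam - 2 * α + Δ) / 2
  set t := (lam - 2 * α - Δ) / 2
  have hst : s * t = (1 - α) ^ 2 := by linear_combination (-1 / 4) * hΔ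
  have hs : 0 < s := by simp only [s]; linarith
  have ht : 0 < t := pos_of_mul_pos_right (hst ▸ pow_pos (sub_pos.2 hα) 2) hs.le
  have hts : ‖t‖ < ‖s‖ := by
    rw [Real.norm_of_nonneg ht.le, Real.norm_of_nonneg hs.le]
    simp only [s, t]
    linarith
  have hA : (lam + Δ) / (2 * Δ) ≠ 0 := by positivity
  have hlim :=
    tendsto_div_pow_of_eq_mul_pow_add_mul_pow hts (phiB_eq_mul_pow_add_mul_pow hΔ hΔ0.ne')
  have hB : ∀ᶠ n in atTop, phiB α lam (n + 1) ≠ 0 :=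
    (((tendsto_add_atTop_iff_nat 1).2 hlim).eventually_ne hA).mono
      fun n hn => (div_ne_zero_iff.1 hn).1
  have hval : lam - α - (1 - α) ^ 2 * s⁻¹ = (lam + Δ) / 2 := by
    rw [← hst]
    field_simp
    simp only [t]
    ring
  rw [← hval]
  refine (((tendsto_div_succ_of_tendsto_div_pow hs.ne' hA hlim).const_mul _).const_sub _).congr'
    (hB.mono fun n hn => ?_)
  dsimp only
  rw [phiP_add_two]
  field_simp

end Spectral

theorem stmt7_general (α lam : ℝ) (hα : α ∈ Set.Ico (0:ℝ) 1) (hlam : 2 < lam) :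
    Filter.Tendsto (fun n : ℕ => phiB α lam n / phiP α lam (n+1)) Filter.atTop
      (nhds ((lam - Real.sqrt ((lam - 4*α + 2)*(lam - 2)))
              / (2*α*(lam - 2) + 2))) := by
  obtain ⟨hα0, hα1⟩ := hα
  have hprod : 0 < (lam - 4 * α + 2) * (lam - 2) := by nlinarith
  have hΔ := Real.sq_sqrt hprod.le
  have hΔ0 := Real.sqrt_pos.2 hprod
  rw [← tendsto_add_atTop_iff_nat 1]
  convert (tendsto_phiP_div_phiB hα1 hlam hΔ hΔ0).inv₀ (by positivity) using 2
  · rw [inv_div]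
  · rw [inv_div, div_eq_div_iff (by nlinarith) (by positivity)]
    linear_combination -hΔ

theorem stmt7 (α lam : ℝ) (hα : α ∈ Set.Ico (0:ℝ) 1) (hlam : 2 < lam)
    (hroot : ∀ n : ℕ, 1 ≤ n → phiP α lam n ≠ 0) :
    Filter.Tendsto (fun n : ℕ => phiB α lam n / phiP α lam (n+1)) Filter.atTop
      (nhds ((lam - Real.sqrt ((lam - 4*α + 2)*(lam - 2)))
              / (2*α*(lam - 2) + 2))) :=
  stmt7_general α lam hα hlam
end

section
/- For every α ∈ [0, 1/2), the spectral radius of A_α(P_n) for the path P_n on n ≥ 2 vertices satisfies 2α + 2(1−α)cos(π/n) ≤ ρ(A_α(P_n)) ≤ 2α + 2(1−α)cos(π/(n+1)). In particular ρ(A_α(P_n)) < 2 for all n. -/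
open SimpleGraph Matrix Filter
open scoped Classical

/-- The Nikiforov matrix `A_α(G) = α D(G) + (1-α) A(G)`. -/
noncomputable def Aalpha {V : Type*} [Fintype V] [DecidableEq V]
    (G : SimpleGraph V) (α : ℝ) : Matrix V V ℝ :=
  α • Matrix.diagonal (fun v => (G.degree v : ℝ)) + (1 - α) • G.adjMatrix ℝ

/-- Spectral radius of a real matrix: the sup of the absolute values of its
(real) spectrum. -/
noncomputable def specRad {V : Type*} [Fintype V] [DecidableEq V]
    (M : Matrix V V ℝ) : ℝ :=
  sSup (abs '' spectrum ℝ M)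

/-!
Both bounds come from comparing `A_α(P_n)` with a positive vector `x_j = sin ((j + s) θ)`.
Since `x_{j-1} + x_{j+1} = 2 cos θ · x_j`, such a vector satisfies
`A_α x = (2α + 2(1-α) cos θ) x` except for correction terms at the two end vertices.
For `s = 1`, `θ = π/(n+1)` (the Perron vector of `A(P_n)`) the corrections make `A_α x ≤ c x`,
which bounds every eigenvalue in absolute value since `A_α` is nonnegative and symmetric.
For `s = 1/2`, `θ = π/n` (the Perron vector of the signless Laplacian) they make `c x ≤ A_α x`
as soon as `α ≤ 1/2`, and then `c I - A_α` cannot be positive definite.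
-/

section SpectralBounds

variable {ι : Type*} [Fintype ι] [DecidableEq ι] {M : Matrix ι ι ℝ}

lemma abs_le_of_vecMul_le_smul (hM : ∀ i j, 0 ≤ M i j) {w : ι → ℝ} (hw : ∀ i, 0 < w i)
    {c : ℝ} (hwM : ∀ j, (w ᵥ* M) j ≤ c * w j) {μ : ℝ} (hμ : μ ∈ spectrum ℝ M) :
    |μ| ≤ c := by
  rw [← Matrix.spectrum_toLin', ← Module.End.hasEigenvalue_iff_mem_spectrum] at hμ
  obtain ⟨v, hv⟩ := hμ.exists_hasEigenvector
  have hMv : M *ᵥ v = μ • v := by rw [← Matrix.toLin'_apply, hv.apply_eq_smul]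
  set y : ι → ℝ := fun i => |v i|
  have hy : ∀ i, |μ| * y i ≤ (M *ᵥ y) i := fun i => by
    calc |μ| * y i = |(M *ᵥ v) i| := by simp [hMv, y, abs_mul]
      _ ≤ ∑ j, |M i j * v j| := Finset.abs_sum_le_sum_abs _ _
      _ = (M *ᵥ y) i := by simp [Matrix.mulVec, dotProduct, y, abs_mul, abs_of_nonneg (hM _ _)]
  have hpos : 0 < w ⬝ᵥ y := by
    obtain ⟨i, hi⟩ := Function.ne_iff.mp hv.2
    exact Finset.sum_pos' (fun j _ => mul_nonneg (hw j).le (abs_nonneg _))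
      ⟨i, Finset.mem_univ _, mul_pos (hw i) (abs_pos.mpr hi)⟩
  refine le_of_mul_le_mul_right ?_ hpos
  calc |μ| * (w ⬝ᵥ y) = w ⬝ᵥ (|μ| • y) := by rw [dotProduct_smul, smul_eq_mul]
    _ ≤ w ⬝ᵥ (M *ᵥ y) := dotProduct_le_dotProduct_of_nonneg_left hy (fun i => (hw i).le)
    _ = (w ᵥ* M) ⬝ᵥ y := Matrix.dotProduct_mulVec _ _ _
    _ ≤ (c • w) ⬝ᵥ y := dotProduct_le_dotProduct_of_nonneg_right hwM (fun i => abs_nonneg _)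
    _ = c * (w ⬝ᵥ y) := by rw [smul_dotProduct, smul_eq_mul]

lemma Matrix.IsHermitian.exists_mem_spectrum_ge_of_smul_le_mulVec (hM : M.IsHermitian) {u : ι → ℝ}
    (hu : 0 ≤ u) (hu0 : u ≠ 0) {c : ℝ} (huM : ∀ i, c * u i ≤ (M *ᵥ u) i) :
    ∃ μ ∈ spectrum ℝ M, c ≤ μ := by
  by_contra! h
  set N := algebraMap ℝ (Matrix ι ι ℝ) c - M
  have hN : N.IsHermitian := (isHermitian_diagonal_of_self_adjoint _ (IsSelfAdjoint.all _)).sub hM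
  have hpd : N.PosDef := hN.posDef_iff_eigenvalues_pos.mpr fun i => by
    obtain ⟨μ, hμ, hμi⟩ : ∃ μ ∈ spectrum ℝ M, c - μ = hN.eigenvalues i := by
      simpa [← spectrum.singleton_sub_eq, Set.mem_sub, N] using hN.eigenvalues_mem_spectrum_real i
    linarith [h μ hμ]
  have hneg : star u ⬝ᵥ (N *ᵥ u) ≤ 0 := Finset.sum_nonpos fun i _ => by
    simp only [N, sub_mulVec, Pi.sub_apply, Algebra.algebraMap_eq_smul_one, smul_mulVec,
      one_mulVec, Pi.smul_apply, smul_eq_mul, star_trivial]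
    exact mul_nonpos_of_nonneg_of_nonpos (hu i) (sub_nonpos.mpr (huM i))
  exact (hpd.dotProduct_mulVec_pos hu0).not_ge hneg

lemma abs_le_specRad {μ : ℝ} (hμ : μ ∈ spectrum ℝ M) : |μ| ≤ specRad M :=
  le_csSup (M.finite_spectrum.image _).bddAbove ⟨μ, hμ, rfl⟩

lemma specRad_le {c : ℝ} (hne : (spectrum ℝ M).Nonempty) (h : ∀ μ ∈ spectrum ℝ M, |μ| ≤ c) :
    specRad M ≤ c :=
  csSup_le (hne.image _) (by rintro _ ⟨μ, hμ, rfl⟩; exact h μ hμ)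

end SpectralBounds

section Aalpha

variable {V : Type*} [Fintype V] [DecidableEq V] (G : SimpleGraph V)

lemma Aalpha_isSymm (α : ℝ) : (Aalpha G α).IsSymm := by
  simp [Matrix.IsSymm, Aalpha, transpose_add, transpose_smul]

lemma Aalpha_nonneg {α : ℝ} (hα0 : 0 ≤ α) (hα1 : α ≤ 1) (i j : V) : 0 ≤ Aalpha G α i j := by
  simp only [Aalpha, Matrix.add_apply, Matrix.smul_apply, smul_eq_mul, diagonal_apply,
    adjMatrix_apply]
  exact add_nonneg (mul_nonneg hα0 (by split_ifs <;> positivity))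
    (mul_nonneg (by linarith) (by split_ifs <;> norm_num))

end Aalpha

lemma Fin.sum_ite_val_eq {M : Type*} [AddCommMonoid M] (n m : ℕ) (g : ℕ → M) :
    ∑ j : Fin n, (if (j : ℕ) = m then g j else 0) = if m < n then g m else 0 := by
  simp [Fin.sum_univ_eq_sum_range (fun j => if j = m then g j else 0)]

/-- `f` is also evaluated at the fictitious neighbours `-1` and `n` of the end vertices;
the two `if`s cancel these values again. -/
lemma pathGraph_adjMatrix_mulVec_apply {n : ℕ} (f : ℝ → ℝ) (k : Fin n) :
    ((pathGraph n).adjMatrix ℝ *ᵥ fun j => f j) k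
      = f (k - 1) + f (k + 1) - (if (k : ℕ) = 0 then f (k - 1) else 0)
          - (if (k : ℕ) + 1 = n then f (k + 1) else 0) := by
  have hadj : ∀ j : Fin n, (if (pathGraph n).Adj k j then f j else 0)
      = (if (j : ℕ) = k + 1 then f j else 0)
        + if (k : ℕ) = 0 then 0 else if (j : ℕ) = k - 1 then f j else 0 := by
    intro j; rw [pathGraph_adj]; split_ifs <;> first | omega | simp
  rw [adjMatrix_mulVec_apply, neighborFinset_eq_filter, Finset.sum_filter,
    Finset.sum_congr rfl fun j _ => hadj j, Finset.sum_add_distrib, Finset.sum_ite_irrel,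
    Finset.sum_const_zero, Fin.sum_ite_val_eq n _ (fun m : ℕ => f m),
    Fin.sum_ite_val_eq n _ (fun m : ℕ => f m)]
  have hk := k.isLt
  have hpred : (k : ℕ) ≠ 0 → (((k : ℕ) - 1 : ℕ) : ℝ) = (k : ℝ) - 1 := fun h => by
    rw [Nat.cast_sub (Nat.one_le_iff_ne_zero.mpr h), Nat.cast_one]
  split_ifs <;> first | omega | simp_all [add_comm]

lemma pathGraph_degree {n : ℕ} (k : Fin n) :
    ((pathGraph n).degree k : ℝ)
      = 2 - (if (k : ℕ) = 0 then 1 else 0) - (if (k : ℕ) + 1 = n then 1 else 0) := by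
  have h := pathGraph_adjMatrix_mulVec_apply (fun _ => (1 : ℝ)) k
  rw [show (fun _ : Fin n => (1 : ℝ)) = Function.const _ 1 from rfl,
    adjMatrix_mulVec_const_apply, mul_one] at h
  rw [h]; split_ifs <;> ring

lemma Aalpha_pathGraph_mulVec_apply {n : ℕ} (α : ℝ) (f : ℝ → ℝ) (k : Fin n) :
    (Aalpha (pathGraph n) α *ᵥ fun j => f j) k
      = α * (2 * f k) + (1 - α) * (f (k - 1) + f (k + 1))
        - (if (k : ℕ) = 0 then α * f k + (1 - α) * f (k - 1) else 0)
        - (if (k : ℕ) + 1 = n then α * f k + (1 - α) * f (k + 1) else 0) := by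
  rw [Aalpha, add_mulVec, smul_mulVec, smul_mulVec, Pi.add_apply, Pi.smul_apply, Pi.smul_apply,
    mulVec_diagonal, pathGraph_adjMatrix_mulVec_apply, pathGraph_degree, smul_eq_mul, smul_eq_mul]
  split_ifs <;> ring

noncomputable def pathSinVec (n : ℕ) (s θ : ℝ) : Fin n → ℝ :=
  fun j => Real.sin ((j + s) * θ)

lemma pathSinVec_pos {n : ℕ} {s N : ℝ} (hs : 0 < s) (hsN : n - 1 + s < N) (k : Fin n) :
    0 < pathSinVec n s (Real.pi / N) k := by
  have hk : (k : ℝ) + 1 ≤ n := by exact_mod_cast k.isLt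
  have hN : 0 < N := by linarith [(Nat.cast_nonneg k : (0 : ℝ) ≤ k)]
  apply Real.sin_pos_of_pos_of_lt_pi (by positivity)
  rw [mul_div_assoc', div_lt_iff₀ hN]
  nlinarith [Real.pi_pos]

lemma Aalpha_pathGraph_mulVec_pathSinVec {n : ℕ} (α s θ : ℝ) (k : Fin n) :
    (Aalpha (pathGraph n) α *ᵥ pathSinVec n s θ) k
      = (2 * α + 2 * (1 - α) * Real.cos θ) * Real.sin ((k + s) * θ)
        - (if (k : ℕ) = 0 then α * Real.sin ((k + s) * θ) + (1 - α) * Real.sin ((k - 1 + s) * θ)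
            else 0)
        - (if (k : ℕ) + 1 = n then
            α * Real.sin ((k + s) * θ) + (1 - α) * Real.sin ((k + 1 + s) * θ) else 0) := by
  have hrec : Real.sin ((k - 1 + s) * θ) + Real.sin ((k + 1 + s) * θ)
      = 2 * Real.cos θ * Real.sin ((k + s) * θ) := by
    rw [show (k - 1 + s) * θ = (k + s) * θ - θ by ring,
      show (k + 1 + s) * θ = (k + s) * θ + θ by ring, Real.sin_sub, Real.sin_add]
    ring
  unfold pathSinVec
  rw [Aalpha_pathGraph_mulVec_apply α (fun t => Real.sin ((t + s) * θ))]
  linear_combination (1 - α) * hrec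

lemma Aalpha_pathGraph_mulVec_pathSinVec_le {n : ℕ} {α : ℝ} (hα : 0 ≤ α) (k : Fin n) :
    (Aalpha (pathGraph n) α *ᵥ pathSinVec n 1 (Real.pi / (n + 1))) k
      ≤ (2 * α + 2 * (1 - α) * Real.cos (Real.pi / (n + 1)))
          * pathSinVec n 1 (Real.pi / (n + 1)) k := by
  have hpos := pathSinVec_pos (N := n + 1) one_pos (by linarith) k
  have hend : (k : ℕ) + 1 = n → Real.sin ((k + 1 + 1) * (Real.pi / (n + 1))) = 0 := fun h => by
    rw [← show ((k : ℕ) + 1 : ℝ) = n by exact_mod_cast h, mul_div_cancel₀ _ (by positivity),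
      Real.sin_pi]
  have hstart : (k : ℕ) = 0 → Real.sin ((k - 1 + 1) * (Real.pi / (n + 1))) = 0 := fun h => by
    simp [h]
  rw [Aalpha_pathGraph_mulVec_pathSinVec]
  rw [pathSinVec] at hpos ⊢
  have hαw := mul_nonneg hα hpos.le
  split_ifs with h0 hlast hlast
  · rw [hstart h0, hend hlast]; linarith
  · rw [hstart h0]; linarith
  · rw [hend hlast]; linarith
  · linarith

lemma le_Aalpha_pathGraph_mulVec_pathSinVec {n : ℕ} {α : ℝ} (hα : α ≤ 1 / 2) (k : Fin n) :
    (2 * α + 2 * (1 - α) * Real.cos (Real.pi / n)) * pathSinVec n (1 / 2) (Real.pi / n) k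
      ≤ (Aalpha (pathGraph n) α *ᵥ pathSinVec n (1 / 2) (Real.pi / n)) k := by
  have hpos := pathSinVec_pos (N := n) one_half_pos (by linarith) k
  have hstart : (k : ℕ) = 0 → Real.sin ((k - 1 + 1 / 2) * (Real.pi / n))
      = -Real.sin ((k + 1 / 2) * (Real.pi / n)) := fun h => by
    rw [h, ← Real.sin_neg]; ring_nf
  have hend : (k : ℕ) + 1 = n → Real.sin ((k + 1 + 1 / 2) * (Real.pi / n))
      = -Real.sin ((k + 1 / 2) * (Real.pi / n)) := fun h => by
    have hπ : ((k : ℝ) + 1) * (Real.pi / n) = Real.pi := by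
      rw [show ((k : ℕ) + 1 : ℝ) = n by exact_mod_cast h]
      exact mul_div_cancel₀ _ (Nat.cast_ne_zero.mpr (by omega))
    rw [show (k + 1 + 1 / 2) * (Real.pi / n) = Real.pi / n / 2 + Real.pi by linear_combination hπ,
      show (k + 1 / 2) * (Real.pi / n) = Real.pi - Real.pi / n / 2 by linear_combination hπ,
      Real.sin_add_pi, Real.sin_pi_sub]
  rw [Aalpha_pathGraph_mulVec_pathSinVec]
  rw [pathSinVec] at hpos ⊢
  have hαw := mul_nonneg (by linarith : (0 : ℝ) ≤ 1 - 2 * α) hpos.le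
  split_ifs with h0 hlast hlast
  · rw [hstart h0, hend hlast]; linarith
  · rw [hstart h0]; linarith
  · rw [hend hlast]; linarith
  · linarith

theorem stmt10 (α : ℝ) (hα : α ∈ Set.Ico (0:ℝ) (1/2)) (n : ℕ) (hn : 2 ≤ n) :
    2*α + 2*(1-α) * Real.cos (Real.pi / n)
        ≤ specRad (Aalpha (SimpleGraph.pathGraph n) α) ∧
    specRad (Aalpha (SimpleGraph.pathGraph n) α)
        ≤ 2*α + 2*(1-α) * Real.cos (Real.pi / (n+1)) ∧
    specRad (Aalpha (SimpleGraph.pathGraph n) α) < 2 := by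
  obtain ⟨hα0, hα1⟩ := hα
  have hsymm := Aalpha_isSymm (pathGraph n) α
  have hherm : (Aalpha (pathGraph n) α).IsHermitian := isHermitian_iff_isSymm.mpr hsymm
  obtain ⟨μ, hμ, hlower⟩ :=
    hherm.exists_mem_spectrum_ge_of_smul_le_mulVec
      (fun k => (pathSinVec_pos (N := n) one_half_pos (by linarith) k).le)
      (Function.ne_iff.mpr ⟨⟨0, by omega⟩, (pathSinVec_pos one_half_pos (by linarith) _).ne'⟩)
      (le_Aalpha_pathGraph_mulVec_pathSinVec hα1.le)
  have hupper : ∀ ν ∈ spectrum ℝ (Aalpha (pathGraph n) α),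
      |ν| ≤ 2 * α + 2 * (1 - α) * Real.cos (Real.pi / (n + 1)) := fun ν hν =>
    abs_le_of_vecMul_le_smul (Aalpha_nonneg _ hα0 (by linarith))
      (pathSinVec_pos (N := n + 1) one_pos (by linarith))
      (fun k => by
        rw [← mulVec_transpose, hsymm.eq]
        exact Aalpha_pathGraph_mulVec_pathSinVec_le hα0 k) hν
  have hρ := specRad_le ⟨μ, hμ⟩ hupper
  have hcos : Real.cos (Real.pi / (n + 1)) < 1 := by
    simpa using Real.cos_lt_cos_of_nonneg_of_le_pi le_rfl
      (div_le_self Real.pi_pos.le (by linarith [(Nat.cast_nonneg n : (0 : ℝ) ≤ n)]))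
      (by positivity : 0 < Real.pi / (n + 1))
  refine ⟨hlower.trans ((le_abs_self μ).trans (abs_le_specRad hμ)), hρ, hρ.trans_lt ?_⟩
  nlinarith
end

section
/- For each fixed α ∈ [0,1), the sequence ρ(A_α(P_n)) of A_α-spectral radii of the paths P_n is strictly increasing and converges to 2; in particular, 2 is a limit point of the A_α-spectral radius over all finite simple graphs. -/
open SimpleGraph Matrix Filter
open scoped Classical

namespace SpecAux

variable {k : ℕ}

noncomputable def qf (M : Matrix (Fin (k+1)) (Fin (k+1)) ℝ) (x : Fin (k+1) → ℝ) : ℝ :=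
  x ⬝ᵥ (M *ᵥ x)

lemma qf_eq (M : Matrix (Fin (k+1)) (Fin (k+1)) ℝ) (x : Fin (k+1) → ℝ) :
    qf M x = ∑ i, ∑ j, x i * (M i j * x j) := by
  simp [qf, dotProduct, mulVec, Finset.mul_sum]

variable {M : Matrix (Fin (k+1)) (Fin (k+1)) ℝ}

noncomputable def mumax (hM : M.IsHermitian) : ℝ := ⨆ i, hM.eigenvalues i

lemma exists_max (hM : M.IsHermitian) : ∃ i0, (∀ j, hM.eigenvalues j ≤ hM.eigenvalues i0) ∧
    hM.eigenvalues i0 = mumax hM := by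
  obtain ⟨i0, h⟩ := Finite.exists_max hM.eigenvalues
  exact ⟨i0, h, le_antisymm (le_ciSup (Set.finite_range _).bddAbove i0) (ciSup_le h)⟩

lemma posSemidef_sub (hM : M.IsHermitian) : (mumax hM • (1 : Matrix (Fin (k+1)) (Fin (k+1)) ℝ) - M).PosSemidef := by
  have h1 : (mumax hM • (1 : Matrix (Fin (k+1)) (Fin (k+1)) ℝ) - M).IsHermitian := by
    simp only [Matrix.IsHermitian, conjTranspose_sub, conjTranspose_smul, star_trivial, hM.eq, isHermitian_one.eq]
  apply h1.posSemidef_iff_eigenvalues_nonneg.mpr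
  intro i; show (0:ℝ) ≤ h1.eigenvalues i
  obtain ⟨c, hc, hc2⟩ : ∃ c, c ∈ spectrum ℝ
      (mumax hM • (1 : Matrix (Fin (k+1)) (Fin (k+1)) ℝ) - M) ∧ c = h1.eigenvalues i :=
    ⟨_, h1.eigenvalues_mem_spectrum_real i, rfl⟩
  have heq : mumax hM • (1 : Matrix (Fin (k+1)) (Fin (k+1)) ℝ) - M
      = algebraMap ℝ (Matrix (Fin (k+1)) (Fin (k+1)) ℝ) (mumax hM) - M := by
    simp [Algebra.algebraMap_eq_smul_one]
  rw [heq, ← spectrum.singleton_sub_eq] at hc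
  obtain ⟨r, hr, μ, hμ, hrμ⟩ := Set.mem_sub.mp hc
  rw [Set.mem_singleton_iff] at hr
  rw [hM.spectrum_real_eq_range_eigenvalues] at hμ
  obtain ⟨j, rfl⟩ := hμ
  have : hM.eigenvalues j ≤ mumax hM := le_ciSup (Set.finite_range _).bddAbove j
  rw [← hc2, ← hrμ, hr]
  linarith

lemma rayleigh_le (hM : M.IsHermitian) (x : Fin (k+1) → ℝ) : qf M x ≤ mumax hM * ∑ i, x i ^ 2 := by
  have h := (posSemidef_sub hM).dotProduct_mulVec_nonneg x
  have hstar : star x = x := rfl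
  rw [hstar, sub_mulVec, dotProduct_sub, smul_mulVec, one_mulVec,
    dotProduct_smul] at h
  have hdot : x ⬝ᵥ x = ∑ i, x i ^ 2 := by simp [dotProduct, sq]
  simp only [smul_eq_mul, hdot] at h
  unfold qf
  linarith

lemma evb_norm (hM : M.IsHermitian) (j : Fin (k+1)) : ∑ i, (hM.eigenvectorBasis j i)^2 = 1 := by
  have := hM.eigenvectorBasis.orthonormal.1 j
  rw [EuclideanSpace.norm_eq] at this
  have h2 := Real.sqrt_eq_one.mp this
  simpa [Real.norm_eq_abs, sq_abs] using h2

lemma qf_abs_le (hpos : ∀ i j, 0 ≤ M i j) (x : Fin (k+1) → ℝ) :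
    |qf M x| ≤ qf M (fun i => |x i|) := by
  rw [qf_eq, qf_eq]
  calc |∑ i, ∑ j, x i * (M i j * x j)|
      ≤ ∑ i, |∑ j, x i * (M i j * x j)| := Finset.abs_sum_le_sum_abs _ _
    _ ≤ ∑ i, ∑ j, |x i * (M i j * x j)| :=
        Finset.sum_le_sum fun i _ => Finset.abs_sum_le_sum_abs _ _
    _ = ∑ i, ∑ j, |x i| * (M i j * |x j|) := by
        refine Finset.sum_congr rfl fun i _ => Finset.sum_congr rfl fun j _ => ?_
        rw [abs_mul, abs_mul, abs_of_nonneg (hpos i j)]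

lemma abs_eigen_le (hM : M.IsHermitian) (hpos : ∀ i j, 0 ≤ M i j) (i : Fin (k+1)) :
    |hM.eigenvalues i| ≤ mumax hM := by
  have hqf : qf M ⇑(hM.eigenvectorBasis i) = hM.eigenvalues i := by
    unfold qf
    rw [hM.mulVec_eigenvectorBasis, dotProduct_smul, smul_eq_mul]
    have hd : (⇑(hM.eigenvectorBasis i) ⬝ᵥ ⇑(hM.eigenvectorBasis i))
        = ∑ j, hM.eigenvectorBasis i j ^ 2 := by simp [dotProduct, sq]
    rw [hd, evb_norm hM i, mul_one]
  have h1 : |qf M ⇑(hM.eigenvectorBasis i)| ≤ qf M (fun j => |hM.eigenvectorBasis i j|) :=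
    qf_abs_le hpos _
  have h2 : qf M (fun j => |hM.eigenvectorBasis i j|) ≤
      mumax hM * ∑ j, |hM.eigenvectorBasis i j| ^ 2 := rayleigh_le hM _
  have h3 : ∑ j, |hM.eigenvectorBasis i j| ^ 2 = 1 := by simpa [sq_abs] using evb_norm hM i
  rw [h3, mul_one] at h2
  rw [hqf] at h1
  linarith

lemma specRad_eq_mumax (hM : M.IsHermitian) (hpos : ∀ i j, 0 ≤ M i j) : specRad M = mumax hM := by
  have hset : abs '' spectrum ℝ M = Set.range (fun i => |hM.eigenvalues i|) := by
    rw [hM.spectrum_real_eq_range_eigenvalues, ← Set.range_comp]; rfl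
  have hs : specRad M = ⨆ i, |hM.eigenvalues i| := by
    show sSup (abs '' spectrum ℝ M) = _
    rw [hset]
    rfl
  rw [hs]
  refine le_antisymm (ciSup_le fun i => abs_eigen_le hM hpos i) ?_
  obtain ⟨i0, _, h2⟩ := exists_max hM
  calc mumax hM = hM.eigenvalues i0 := h2.symm
    _ ≤ |hM.eigenvalues i0| := le_abs_self _
    _ ≤ ⨆ i, |hM.eigenvalues i| := le_ciSup (f := fun i => |hM.eigenvalues i|) (Set.finite_range _).bddAbove i0

lemma exists_eigenvector (hM : M.IsHermitian) (hpos : ∀ i j, 0 ≤ M i j) :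
    ∃ v : Fin (k+1) → ℝ, M *ᵥ v = specRad M • v ∧ ∑ i, v i ^ 2 = 1 := by
  obtain ⟨i0, _, h2⟩ := exists_max hM
  refine ⟨⇑(hM.eigenvectorBasis i0), ?_, evb_norm hM i0⟩
  rw [hM.mulVec_eigenvectorBasis, h2, specRad_eq_mumax hM hpos]

lemma rayleigh_specRad (hM : M.IsHermitian) (hpos : ∀ i j, 0 ≤ M i j) (x : Fin (k+1) → ℝ) :
    qf M x ≤ specRad M * ∑ i, x i ^ 2 := by
  rw [specRad_eq_mumax hM hpos]; exact rayleigh_le hM x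

lemma qf_of_eigen {μ : ℝ} {v : Fin (k+1) → ℝ} (hv : M *ᵥ v = μ • v)
    (hn : ∑ i, v i ^ 2 = 1) : qf M v = μ := by
  unfold qf
  rw [hv, dotProduct_smul]
  have : v ⬝ᵥ v = ∑ j, v j ^ 2 := by simp [dotProduct, sq]
  rw [smul_eq_mul, this, hn, mul_one]

lemma specRad_le_of (hM : M.IsHermitian) (hpos : ∀ i j, 0 ≤ M i j) {C : ℝ}
    (h : ∀ x : Fin (k+1) → ℝ, qf M x ≤ C * ∑ i, x i ^ 2) : specRad M ≤ C := by
  obtain ⟨v, hv, hn⟩ := exists_eigenvector hM hpos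
  have hqf : qf M v = specRad M := by
    unfold qf; rw [hv, dotProduct_smul]
    have : v ⬝ᵥ v = ∑ j, v j ^ 2 := by simp [dotProduct, sq]
    rw [smul_eq_mul, this, hn, mul_one]
  have := h v
  rw [hqf, hn, mul_one] at this
  exact this

end SpecAux


lemma sum_ite_val (m c : ℕ) : (∑ j : Fin m, if j.val = c then (1:ℕ) else 0)
    = if c < m then 1 else 0 := by
  by_cases h : c < m
  · rw [if_pos h, Finset.sum_eq_single (⟨c, h⟩ : Fin m)]
    · simp
    · intro j _ hj
      have : j.val ≠ c := fun hc => hj (Fin.ext hc)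
      simp [this]
    · simp
  · rw [if_neg h]
    apply Finset.sum_eq_zero
    intro j _
    have : j.val ≠ c := by omega
    simp [this]

lemma degree_pathGraph (m : ℕ) (i : Fin m) :
    (pathGraph m).degree i = (if 1 ≤ i.val then 1 else 0) + (if i.val + 1 < m then 1 else 0) := by
  have h0 : (pathGraph m).degree i = ∑ j : Fin m, if (pathGraph m).Adj i j then 1 else 0 := by
    rw [← card_neighborFinset_eq_degree, neighborFinset_eq_filter, Finset.card_filter]
  rw [h0]
  have hsplit : ∀ j : Fin m, (if (pathGraph m).Adj i j then (1:ℕ) else 0)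
      = (if j.val + 1 = i.val then 1 else 0) + (if j.val = i.val + 1 then 1 else 0) := by
    intro j
    rw [pathGraph_adj]
    by_cases h2 : (j:ℕ) + 1 = i.val
    · have h3 : ¬((j:ℕ) = i.val + 1) := by omega
      rw [if_pos (Or.inr h2), if_pos h2, if_neg h3]
    · by_cases h1 : (i:ℕ) + 1 = j.val
      · have h3 : (j:ℕ) = i.val + 1 := by omega
        rw [if_pos (Or.inl h1), if_neg h2, if_pos h3]
      · have h3 : ¬((j:ℕ) = i.val + 1) := by omega
        rw [if_neg (by tauto), if_neg h2, if_neg h3]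
  rw [Finset.sum_congr rfl (fun j _ => hsplit j), Finset.sum_add_distrib]
  congr 1
  · by_cases h : 1 ≤ i.val
    · have hc : ∀ j : Fin m, ((j:ℕ) + 1 = i.val) ↔ (j.val = i.val - 1) := fun j => by omega
      simp only [hc]
      rw [sum_ite_val, if_pos h, if_pos (by omega : i.val - 1 < m)]
    · rw [if_neg h]
      apply Finset.sum_eq_zero
      intro j _
      have : ¬((j:ℕ) + 1 = i.val) := by omega
      simp [this]
  · rw [sum_ite_val]



lemma Aalpha_apply {V : Type*} [Fintype V] [DecidableEq V] (G : SimpleGraph V) (α : ℝ)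
    (i j : V) : Aalpha G α i j
      = α * (if i = j then (G.degree i : ℝ) else 0) + (1 - α) * (if G.Adj i j then 1 else 0) := by
  simp [Aalpha, Matrix.add_apply, Matrix.smul_apply, Matrix.diagonal_apply, adjMatrix_apply,
    smul_eq_mul]

lemma Aalpha_nonneg_s11 {V : Type*} [Fintype V] [DecidableEq V] (G : SimpleGraph V) {α : ℝ}
    (h0 : 0 ≤ α) (h1 : α ≤ 1) (i j : V) : 0 ≤ Aalpha G α i j := by
  rw [Aalpha_apply]
  have : (0:ℝ) ≤ (if i = j then (G.degree i : ℝ) else 0) := by positivity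
  have h2 : (0:ℝ) ≤ (if G.Adj i j then (1:ℝ) else 0) := by positivity
  nlinarith

lemma Aalpha_isHermitian {V : Type*} [Fintype V] [DecidableEq V] (G : SimpleGraph V) (α : ℝ) :
    (Aalpha G α).IsHermitian := by
  unfold Matrix.IsHermitian
  ext i j
  rw [conjTranspose_apply, Aalpha_apply, Aalpha_apply, star_trivial]
  by_cases h : i = j
  · subst h; simp
  · have h' : ¬ (j = i) := fun hh => h hh.symm
    rw [if_neg h, if_neg h', G.adj_comm]

lemma qf_Aalpha {V : Type*} [Fintype V] [DecidableEq V] (G : SimpleGraph V) (α : ℝ)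
    (x : V → ℝ) : x ⬝ᵥ (Aalpha G α *ᵥ x)
      = α * (∑ i, (G.degree i : ℝ) * x i ^ 2)
        + (1 - α) * (∑ i, ∑ j, (G.adjMatrix ℝ) i j * (x i * x j)) := by
  unfold Aalpha
  rw [add_mulVec, dotProduct_add, smul_mulVec, smul_mulVec,
    dotProduct_smul, dotProduct_smul, smul_eq_mul, smul_eq_mul]
  congr 1
  · congr 1
    unfold dotProduct
    refine Finset.sum_congr rfl fun i _ => ?_
    rw [mulVec_diagonal]
    ring
  · congr 1
    unfold dotProduct mulVec dotProduct
    refine Finset.sum_congr rfl fun i _ => ?_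
    rw [Finset.mul_sum]
    refine Finset.sum_congr rfl fun j _ => ?_
    ring

lemma adj_row_sum {V : Type*} [Fintype V] [DecidableEq V] (G : SimpleGraph V) (i : V) :
    ∑ j, (G.adjMatrix ℝ) i j = (G.degree i : ℝ) := by
  classical
  simp [adjMatrix_apply, degree, neighborFinset_eq_filter, Finset.sum_boole]

lemma adj_qf_le {V : Type*} [Fintype V] [DecidableEq V] (G : SimpleGraph V) (x : V → ℝ) :
    ∑ i, ∑ j, (G.adjMatrix ℝ) i j * (x i * x j) ≤ ∑ i, (G.degree i : ℝ) * x i ^ 2 := by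
  have key : ∑ i, ∑ j, (G.adjMatrix ℝ) i j * (x i * x j)
      ≤ ∑ i, ∑ j, (G.adjMatrix ℝ) i j * ((x i ^ 2 + x j ^ 2) / 2) := by
    refine Finset.sum_le_sum fun i _ => Finset.sum_le_sum fun j _ => ?_
    have hA : (0:ℝ) ≤ (G.adjMatrix ℝ) i j := by simp [adjMatrix_apply]; positivity
    nlinarith [sq_nonneg (x i - x j)]
  refine key.trans (le_of_eq ?_)
  have h1 : ∀ i j, (G.adjMatrix ℝ) i j * ((x i ^ 2 + x j ^ 2) / 2)
      = (G.adjMatrix ℝ) i j * x i ^ 2 / 2 + (G.adjMatrix ℝ) i j * x j ^ 2 / 2 := by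
    intro i j; ring
  simp only [h1, Finset.sum_add_distrib]
  have h2 : ∑ i, ∑ j, (G.adjMatrix ℝ) i j * x i ^ 2 / 2
      = ∑ i, (G.degree i : ℝ) * x i ^ 2 / 2 := by
    refine Finset.sum_congr rfl fun i _ => ?_
    rw [← Finset.sum_div, ← Finset.sum_mul, adj_row_sum]
  have h3 : ∑ i, ∑ j, (G.adjMatrix ℝ) i j * x j ^ 2 / 2
      = ∑ i, (G.degree i : ℝ) * x i ^ 2 / 2 := by
    rw [Finset.sum_comm]
    refine Finset.sum_congr rfl fun j _ => ?_
    rw [← Finset.sum_div, ← Finset.sum_mul]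
    congr 2
    have : ∀ i, (G.adjMatrix ℝ) i j = (G.adjMatrix ℝ) j i := by
      intro i; simp [adjMatrix_apply, G.adj_comm]
    rw [Finset.sum_congr rfl fun i _ => this i, adj_row_sum]
  rw [h2, h3]
  rw [← Finset.sum_add_distrib]
  refine Finset.sum_congr rfl fun i _ => by ring



lemma degree_pathGraph_le (m : ℕ) (i : Fin m) : (pathGraph m).degree i ≤ 2 := by
  rw [degree_pathGraph]
  split_ifs <;> omega

lemma degree_pathGraph_sum (n : ℕ) :
    ∑ i : Fin (n+1), ((pathGraph (n+1)).degree i : ℝ) = 2 * n := by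
  have hN : ∑ i : Fin (n+1), (pathGraph (n+1)).degree i = 2 * n := by
    simp only [degree_pathGraph]
    rw [Finset.sum_add_distrib]
    have h1 : ∑ i : Fin (n+1), (if 1 ≤ i.val then 1 else 0) = n := by
      rw [Fin.sum_univ_succ]
      simp [Fin.val_succ]
    have h2 : ∑ i : Fin (n+1), (if i.val + 1 < n+1 then 1 else 0) = n := by
      rw [Fin.sum_univ_castSucc]
      have : ∀ i : Fin n, (if (i.castSucc).val + 1 < n+1 then 1 else 0) = 1 := by
        intro i
        rw [if_pos (by simp only [Fin.coe_castSucc]; omega)]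
      simp only [this]
      simp
    omega
  calc ∑ i : Fin (n+1), ((pathGraph (n+1)).degree i : ℝ)
      = ((∑ i : Fin (n+1), (pathGraph (n+1)).degree i : ℕ) : ℝ) := by push_cast; ring_nf
    _ = ((2 * n : ℕ) : ℝ) := by rw [hN]
    _ = 2 * n := by push_cast; ring



lemma Aalpha_symm {V : Type*} [Fintype V] [DecidableEq V] (G : SimpleGraph V) (α : ℝ)
    (a b : V) : Aalpha G α a b = Aalpha G α b a := by
  rw [Aalpha_apply, Aalpha_apply, G.adj_comm]
  by_cases h : a = b
  · subst h; rfl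
  · rw [if_neg h, if_neg (fun hh : b = a => h hh.symm)]

lemma pathGraph_adj_castSucc (n : ℕ) (i j : Fin (n+1)) :
    (pathGraph (n+2)).Adj i.castSucc j.castSucc ↔ (pathGraph (n+1)).Adj i j := by
  rw [pathGraph_adj, pathGraph_adj]
  simp [Fin.coe_castSucc]

lemma degree_pathGraph_castSucc (n : ℕ) (i : Fin (n+1)) :
    (pathGraph (n+2)).degree i.castSucc
      = (pathGraph (n+1)).degree i + (if i = Fin.last n then 1 else 0) := by
  rw [degree_pathGraph, degree_pathGraph]
  simp only [Fin.coe_castSucc]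
  have hil : i = Fin.last n ↔ i.val = n := by
    rw [Fin.ext_iff, Fin.val_last]
  have hi := i.is_lt
  by_cases hl : i.val = n
  · rw [if_pos (hil.mpr hl)]
    split_ifs <;> omega
  · rw [if_neg (fun h => hl (hil.mp h))]
    split_ifs <;> omega

lemma Aalpha_castSucc (n : ℕ) (α : ℝ) (i j : Fin (n+1)) :
    Aalpha (pathGraph (n+2)) α i.castSucc j.castSucc
    = Aalpha (pathGraph (n+1)) α i j + α * (if i = Fin.last n ∧ j = i then 1 else 0) := by
  rw [Aalpha_apply, Aalpha_apply]
  have hdeg : ((pathGraph (n+2)).degree i.castSucc : ℝ)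
      = ((pathGraph (n+1)).degree i : ℝ) + (if i = Fin.last n then 1 else 0) := by
    rw [degree_pathGraph_castSucc]
    push_cast [apply_ite (Nat.cast : ℕ → ℝ)]
    rfl
  rw [hdeg]
  have heq : (i.castSucc = j.castSucc) ↔ i = j := Fin.castSucc_inj
  rw [if_congr heq rfl rfl, if_congr (pathGraph_adj_castSucc n i j) rfl rfl]
  by_cases h1 : i = j
  · subst h1
    rw [if_congr (and_iff_left rfl) rfl rfl, if_neg ((pathGraph (n+1)).irrefl)]
    by_cases h2 : i = Fin.last n
    · rw [if_pos h2, if_pos rfl, if_pos rfl]; ring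
    · rw [if_neg h2, if_pos rfl, if_pos rfl]; ring
  · rw [if_neg h1, if_neg h1, if_neg (fun h : i = Fin.last n ∧ j = i => h1 h.2.symm)]; ring

lemma Aalpha_castSucc_last (n : ℕ) (α : ℝ) (i : Fin (n+1)) :
    Aalpha (pathGraph (n+2)) α i.castSucc (Fin.last (n+1))
    = (1 - α) * (if i = Fin.last n then 1 else 0) := by
  rw [Aalpha_apply]
  have hne : i.castSucc ≠ Fin.last (n+1) := (Fin.castSucc_lt_last i).ne
  rw [if_neg hne]
  have hadj : (pathGraph (n+2)).Adj i.castSucc (Fin.last (n+1)) ↔ i = Fin.last n := by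
    rw [pathGraph_adj]
    simp only [Fin.coe_castSucc, Fin.val_last]
    have hi := i.is_lt
    rw [Fin.ext_iff, Fin.val_last]
    omega
  rw [if_congr hadj rfl rfl]
  ring

lemma Aalpha_last_last (n : ℕ) (α : ℝ) :
    Aalpha (pathGraph (n+2)) α (Fin.last (n+1)) (Fin.last (n+1)) = α := by
  rw [Aalpha_apply]
  rw [if_pos rfl, if_neg (pathGraph (n+2)).irrefl]
  have : (pathGraph (n+2)).degree (Fin.last (n+1)) = 1 := by
    rw [degree_pathGraph]
    simp [Fin.val_last]
  rw [this]
  norm_num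

lemma sum_ite_last {n : ℕ} (c : Fin (n+1) → ℝ) (P : Prop) [Decidable P] :
    ∑ j : Fin (n+1), (if P ∧ j = Fin.last n then 1 else 0) * c j
      = if P then c (Fin.last n) else 0 := by
  by_cases hP : P
  · simp only [hP, true_and]
    rw [Finset.sum_congr rfl (fun j _ => by rw [ite_mul, one_mul, zero_mul])]
    rw [Finset.sum_ite_eq' Finset.univ (Fin.last n) c]
    simp
  · simp [hP]

lemma mulVec_snoc_castSucc (n : ℕ) (α : ℝ) (x : Fin (n+1) → ℝ) (ε : ℝ) (i : Fin (n+1)) :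
    (Aalpha (pathGraph (n+2)) α *ᵥ Fin.snoc x ε) i.castSucc
      = (Aalpha (pathGraph (n+1)) α *ᵥ x) i
        + (if i = Fin.last n then α * x (Fin.last n) + (1-α) * ε else 0) := by
  unfold mulVec dotProduct
  rw [Fin.sum_univ_castSucc]
  simp only [Fin.snoc_castSucc, Fin.snoc_last]
  rw [Finset.sum_congr rfl (fun j _ => by rw [Aalpha_castSucc, add_mul])]
  rw [Finset.sum_add_distrib, Aalpha_castSucc_last]
  have h2 : ∑ j : Fin (n+1), α * (if i = Fin.last n ∧ j = i then 1 else 0) * x j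
      = if i = Fin.last n then α * x (Fin.last n) else 0 := by
    by_cases hl : i = Fin.last n
    · subst hl
      have hterm : ∀ j : Fin (n+1),
          α * (if Fin.last n = Fin.last n ∧ j = Fin.last n then (1:ℝ) else 0) * x j
          = α * ((if True ∧ j = Fin.last n then (1:ℝ) else 0) * x j) := by
        intro j; by_cases h : j = Fin.last n <;> simp [h]
      rw [Finset.sum_congr rfl fun j _ => hterm j, ← Finset.mul_sum, sum_ite_last x True]
      simp
    · rw [if_neg hl]
      apply Finset.sum_eq_zero
      intro j _
      rw [if_neg (fun h => hl h.1)]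
      ring
  rw [h2]
  by_cases hl : i = Fin.last n
  · rw [if_pos hl, if_pos hl, if_pos hl]; ring
  · rw [if_neg hl, if_neg hl, if_neg hl]; ring

lemma mulVec_snoc_last (n : ℕ) (α : ℝ) (x : Fin (n+1) → ℝ) (ε : ℝ) :
    (Aalpha (pathGraph (n+2)) α *ᵥ Fin.snoc x ε) (Fin.last (n+1))
      = (1-α) * x (Fin.last n) + α * ε := by
  unfold mulVec dotProduct
  rw [Fin.sum_univ_castSucc]
  simp only [Fin.snoc_castSucc, Fin.snoc_last]
  rw [Aalpha_last_last]
  have hterm : ∀ j : Fin (n+1),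
      Aalpha (pathGraph (n+2)) α (Fin.last (n+1)) j.castSucc * x j
      = (1-α) * ((if True ∧ j = Fin.last n then (1:ℝ) else 0) * x j) := by
    intro j
    rw [Aalpha_symm, Aalpha_castSucc_last]
    by_cases h : j = Fin.last n <;> simp [h]
  rw [Finset.sum_congr rfl fun j _ => hterm j, ← Finset.mul_sum, sum_ite_last x True,
    if_pos trivial]

lemma qf_snoc (n : ℕ) (α : ℝ) (x : Fin (n+1) → ℝ) (ε : ℝ) :
    (Fin.snoc x ε : Fin (n+2) → ℝ) ⬝ᵥ (Aalpha (pathGraph (n+2)) α *ᵥ Fin.snoc x ε)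
      = x ⬝ᵥ (Aalpha (pathGraph (n+1)) α *ᵥ x)
        + α * x (Fin.last n) ^ 2 + 2 * (1-α) * x (Fin.last n) * ε + α * ε ^ 2 := by
  unfold dotProduct
  rw [Fin.sum_univ_castSucc]
  simp only [Fin.snoc_castSucc, Fin.snoc_last]
  rw [Finset.sum_congr rfl (fun i _ => by rw [mulVec_snoc_castSucc, mul_add]),
    Finset.sum_add_distrib, mulVec_snoc_last]
  have h2 : ∑ i : Fin (n+1), x i * (if i = Fin.last n then α * x (Fin.last n) + (1-α) * ε else 0)
      = x (Fin.last n) * (α * x (Fin.last n) + (1-α) * ε) := by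
    rw [Finset.sum_congr rfl (fun i _ => by rw [mul_ite, mul_zero])]
    rw [Finset.sum_ite_eq' Finset.univ (Fin.last n)]
    simp
  rw [h2]
  ring

lemma sq_sum_snoc (n : ℕ) (x : Fin (n+1) → ℝ) (ε : ℝ) :
    ∑ i : Fin (n+2), (Fin.snoc x ε : Fin (n+2) → ℝ) i ^ 2 = (∑ i, x i ^ 2) + ε ^ 2 := by
  rw [Fin.sum_univ_castSucc]
  simp

lemma Aalpha_mulVec_apply {V : Type*} [Fintype V] [DecidableEq V] (G : SimpleGraph V)
    (α : ℝ) (v : V → ℝ) (i : V) :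
    (Aalpha G α *ᵥ v) i = α * (G.degree i : ℝ) * v i
      + (1-α) * ∑ u ∈ G.neighborFinset i, v u := by
  unfold Aalpha
  rw [add_mulVec, smul_mulVec, smul_mulVec, Pi.add_apply, Pi.smul_apply,
    Pi.smul_apply, mulVec_diagonal, adjMatrix_mulVec_apply, smul_eq_mul, smul_eq_mul]
  ring

lemma eigenvector_last_ne_zero (n : ℕ) {α μ : ℝ} (hα1 : α < 1) {v : Fin (n+1) → ℝ}
    (hv : Aalpha (pathGraph (n+1)) α *ᵥ v = μ • v) (hlast : v (Fin.last n) = 0) :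
    v = 0 := by
  have key : ∀ k, k ≤ n → ∀ u : Fin (n+1), n - k ≤ u.val → v u = 0 := by
    intro k
    induction k with
    | zero =>
      intro _ u hu
      have hu2 := u.is_lt
      have : u = Fin.last n := Fin.ext (by simp [Fin.val_last]; omega)
      rw [this]; exact hlast
    | succ k ih =>
      intro hk1 u hu
      by_cases hcase : n - k ≤ u.val
      · exact ih (by omega) u hcase
      · have huv : u.val = n - (k+1) := by omega
        have hi : n - k < n + 1 := by omega
        set i : Fin (n+1) := ⟨n - k, hi⟩ with hidef
        have hvi : v i = 0 := ih (by omega) i (by simp [hidef])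
        have heq := congrFun hv i
        rw [Aalpha_mulVec_apply] at heq
        have hsum : ∑ u' ∈ (pathGraph (n+1)).neighborFinset i, v u' = v u := by
          apply Finset.sum_eq_single_of_mem
          · rw [mem_neighborFinset, pathGraph_adj]
            right
            simp [hidef]
            omega
          · intro b hb hbu
            rw [mem_neighborFinset, pathGraph_adj] at hb
            rcases hb with h1 | h2
            · refine ih (by omega) b ?_
              simp [hidef] at h1
              omega
            · exfalso
              apply hbu
              apply Fin.ext
              simp [hidef] at h2
              omega
        rw [hsum, hvi, Pi.smul_apply, hvi] at heq
        have h0 : (1-α) * v u = 0 := by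
          simpa using heq
        have h1 : (1-α) ≠ 0 := by linarith
        exact (mul_eq_zero.mp h0).resolve_left h1
  funext u
  simpa using key n le_rfl u (by omega)


section Main

variable {α : ℝ}

lemma specRad_le_two (n : ℕ) (hα0 : 0 ≤ α) (hα1 : α < 1) :
    specRad (Aalpha (pathGraph (n+1)) α) ≤ 2 := by
  apply SpecAux.specRad_le_of (Aalpha_isHermitian _ _) (Aalpha_nonneg_s11 _ hα0 hα1.le)
  intro x
  rw [SpecAux.qf, qf_Aalpha]
  have hD2 : ∑ i, ((pathGraph (n+1)).degree i : ℝ) * x i ^ 2 ≤ 2 * ∑ i, x i ^ 2 := by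
    rw [Finset.mul_sum]
    refine Finset.sum_le_sum fun i _ => ?_
    have h1 : ((pathGraph (n+1)).degree i : ℝ) ≤ 2 := by
      have := degree_pathGraph_le (n+1) i
      exact_mod_cast this
    nlinarith [sq_nonneg (x i)]
  have hS : ∑ i, ∑ j, (pathGraph (n+1)).adjMatrix ℝ i j * (x i * x j)
      ≤ ∑ i, ((pathGraph (n+1)).degree i : ℝ) * x i ^ 2 := adj_qf_le _ x
  nlinarith [hS, hD2]

lemma specRad_lower (n : ℕ) (hα0 : 0 ≤ α) (hα1 : α < 1) :
    2 * (n:ℝ) ≤ specRad (Aalpha (pathGraph (n+1)) α) * ((n:ℝ)+1) := by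
  have hray := SpecAux.rayleigh_specRad (Aalpha_isHermitian (pathGraph (n+1)) α)
    (Aalpha_nonneg_s11 _ hα0 hα1.le) (fun _ => 1)
  rw [SpecAux.qf, qf_Aalpha] at hray
  have h1 : ∑ i, ((pathGraph (n+1)).degree i : ℝ) * (1:ℝ) ^ 2 = 2 * n := by
    simp only [one_pow, mul_one]
    exact degree_pathGraph_sum n
  have h2 : ∑ i, ∑ j, (pathGraph (n+1)).adjMatrix ℝ i j * ((1:ℝ) * 1) = 2 * n := by
    simp only [mul_one]
    rw [Finset.sum_congr rfl fun i _ => adj_row_sum (pathGraph (n+1)) i]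
    exact degree_pathGraph_sum n
  have h3 : ∑ _i : Fin (n+1), (1:ℝ) ^ 2 = (n:ℝ) + 1 := by
    simp
  rw [h1, h2, h3] at hray
  calc 2 * (n:ℝ) = α * (2 * n) + (1-α) * (2 * n) := by ring
    _ ≤ _ := hray

lemma specRad_mono_step (n : ℕ) (hα0 : 0 ≤ α) (hα1 : α < 1) :
    specRad (Aalpha (pathGraph (n+1)) α) < specRad (Aalpha (pathGraph (n+2)) α) := by
  obtain ⟨v, hv, hnorm⟩ := SpecAux.exists_eigenvector (Aalpha_isHermitian (pathGraph (n+1)) α)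
    (Aalpha_nonneg_s11 _ hα0 hα1.le)
  set μ := specRad (Aalpha (pathGraph (n+1)) α) with hμ
  have hc : v (Fin.last n) ≠ 0 := by
    intro h0
    have hz := eigenvector_last_ne_zero n hα1 hv h0
    rw [hz] at hnorm
    simp at hnorm
  set c := v (Fin.last n) with hcdef
  set t : ℝ := (1-α)/2 with htdef
  set ε : ℝ := t * c with hεdef
  have hray := SpecAux.rayleigh_specRad (Aalpha_isHermitian (pathGraph (n+2)) α)
    (Aalpha_nonneg_s11 _ hα0 hα1.le) (Fin.snoc v ε)
  rw [SpecAux.qf, qf_snoc, sq_sum_snoc, hnorm] at hray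
  have hqv : v ⬝ᵥ (Aalpha (pathGraph (n+1)) α *ᵥ v) = μ :=
    SpecAux.qf_of_eigen hv hnorm
  rw [hqv, ← hcdef] at hray
  have hμ2 : μ ≤ 2 := specRad_le_two n hα0 hα1
  have hc2 : 0 < c ^ 2 := by positivity
  have h1α : 0 < 1 - α := by linarith
  have key : μ * (1 + ε ^ 2) < μ + α * c ^ 2 + 2 * (1-α) * c * ε + α * ε ^ 2 := by
    rw [hεdef, htdef]
    nlinarith [hc2, h1α, hμ2, hα0, mul_pos (mul_pos h1α h1α) hc2,
      mul_nonneg hα0 hc2.le, mul_nonneg (mul_nonneg hα0 (mul_pos h1α h1α).le) hc2.le]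
  have hpos1 : (0:ℝ) < 1 + ε ^ 2 := by positivity
  have := lt_of_lt_of_le key hray
  exact (mul_lt_mul_iff_of_pos_right hpos1).mp this

end Main

theorem stmt11 (α : ℝ) (hα : α ∈ Set.Ico (0:ℝ) 1) :
    StrictMono (fun n : ℕ => specRad (Aalpha (SimpleGraph.pathGraph (n+1)) α)) ∧
    Filter.Tendsto (fun n : ℕ => specRad (Aalpha (SimpleGraph.pathGraph (n+1)) α))
      Filter.atTop (nhds 2) := by
  obtain ⟨hα0, hα1⟩ := hα
  constructor
  · apply strictMono_nat_of_lt_succ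
    intro n
    exact specRad_mono_step n hα0 hα1
  · have hlow : ∀ n : ℕ, 2 * (n:ℝ) / ((n:ℝ)+1) ≤ specRad (Aalpha (pathGraph (n+1)) α) := by
      intro n
      rw [div_le_iff₀ (by positivity)]
      exact specRad_lower n hα0 hα1
    have hup : ∀ n : ℕ, specRad (Aalpha (pathGraph (n+1)) α) ≤ 2 := fun n =>
      specRad_le_two n hα0 hα1
    have hg : Filter.Tendsto (fun n : ℕ => 2 * (n:ℝ) / ((n:ℝ)+1)) Filter.atTop (nhds 2) := by
      have h := (tendsto_natCast_div_add_atTop (1:ℝ)).const_mul (2:ℝ)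
      simp only [mul_one] at h
      convert h using 2 with n
      · ring
    exact tendsto_of_tendsto_of_tendsto_of_le_of_le hg tendsto_const_nhds hlow hup
end

section
/- The smallest limit point of the spectral radius of signed graphs (with respect to the signed adjacency matrix) is 2. More precisely: (a) 2 is a limit point of signed spectral radii (via the paths P_n with any signature); and (b) if (Γ_k) is a sequence of connected signed graphs with pairwise distinct spectral radii ρ(Γ_k) converging to some γ ≤ 2, then γ = 2. -/
open SimpleGraph Matrix Filter
open scoped Classical

/-- The signed adjacency matrix of `(G, σ)`: entry `σ i j` if `i ~ j`, `0` otherwise. -/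
noncomputable def signedAdj {V : Type*} (G : SimpleGraph V) (σ : V → V → ℝ) :
    Matrix V V ℝ :=
  Matrix.of fun i j => if G.Adj i j then σ i j else 0

/-!
The spectral radius `ρ` of a symmetric matrix bounds its quadratic form on the unit sphere and
dominates the spectral radius of every principal submatrix (interlacing). A signed path is switching
equivalent to the unsigned one; testing its quadratic form on the switching vector and bounding the
row sums by the degrees gives `2 - 2 / n ≤ ρ(P_n, σ) ≤ 2`, whence (a).

For (b): a fixed order admits only finitely many signed adjacency matrices, so pairwise distinct
spectral radii force the orders to infinity, while convergence bounds the radii and hence, by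
`Δ ≤ ρ²`, the degrees. A connected graph of bounded degree and large order has two vertices at
distance at least `L`, and a shortest path between them is an induced `P_(L+1)`, so
`ρ(Γ_k) ≥ 2 - 2 / (L + 1)` for all large `k`.
-/

open Finset Topology

namespace Function.Injective

variable {m n : Type*} [Fintype n] [Fintype m] {f : m → n} (hf : Function.Injective f)
include hf

theorem extend_dotProduct (y : m → ℝ) (z : n → ℝ) :
    Function.extend f y 0 ⬝ᵥ z = y ⬝ᵥ (z ∘ f) :=
  (Fintype.sum_of_injective f hf _ _
    (fun v hv => by rw [Function.extend_apply' _ _ _ hv, Pi.zero_apply, zero_mul])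
    (fun i => by rw [hf.extend_apply, Function.comp_apply])).symm

theorem extend_dotProduct_extend (y z : m → ℝ) :
    Function.extend f y 0 ⬝ᵥ Function.extend f z 0 = y ⬝ᵥ z := by
  rw [hf.extend_dotProduct]
  congr 1
  exact funext (hf.extend_apply z 0)

theorem extend_dotProduct_mulVec_extend (M : Matrix n n ℝ) (y z : m → ℝ) :
    Function.extend f y 0 ⬝ᵥ M *ᵥ Function.extend f z 0 = y ⬝ᵥ M.submatrix f f *ᵥ z := by
  rw [hf.extend_dotProduct]
  congr 1
  ext i
  simp only [Function.comp_apply, mulVec, dotProduct_comm (M (f i)), hf.extend_dotProduct]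
  exact dotProduct_comm _ _

end Function.Injective

section Spectrum

variable {n : Type*} [Fintype n] [DecidableEq n]

section LinftyOpNorm

attribute [local instance] Matrix.linftyOpNormedRing Matrix.linftyOpNormedAlgebra

theorem abs_le_of_mem_spectrum_of_sum_abs_le {M : Matrix n n ℝ} {c : ℝ}
    (h : ∀ i, ∑ j, |M i j| ≤ c) {μ : ℝ} (hμ : μ ∈ spectrum ℝ M) : |μ| ≤ c := by
  have : Nonempty n := by
    by_contra hn
    rw [not_nonempty_iff] at hn
    simp at hμ
  have hc : 0 ≤ c := (Finset.sum_nonneg fun j _ => abs_nonneg _).trans (h (Classical.arbitrary n))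
  calc |μ| = ‖μ‖ := rfl
    _ ≤ ‖M‖ := spectrum.norm_le_norm_of_mem hμ
    _ ≤ c := by
      rw [linfty_opNorm_def, ← NNReal.coe_mk c hc, NNReal.coe_le_coe]
      refine Finset.sup_le fun i _ => ?_
      rw [← NNReal.coe_le_coe]
      simpa using h i

end LinftyOpNorm

theorem bddAbove_abs_spectrum (M : Matrix n n ℝ) : BddAbove (abs '' spectrum ℝ M) :=
  (M.finite_real_spectrum.image _).bddAbove

theorem specRad_nonneg (M : Matrix n n ℝ) : 0 ≤ specRad M :=
  Real.sSup_nonneg (by rintro _ ⟨μ, -, rfl⟩; exact abs_nonneg μ)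

theorem abs_le_specRad_of_mem_spectrum {M : Matrix n n ℝ} {μ : ℝ} (hμ : μ ∈ spectrum ℝ M) :
    |μ| ≤ specRad M :=
  le_csSup (bddAbove_abs_spectrum M) ⟨μ, hμ, rfl⟩

theorem specRad_le_of_sum_abs_le {M : Matrix n n ℝ} {c : ℝ} (hc : 0 ≤ c)
    (h : ∀ i, ∑ j, |M i j| ≤ c) : specRad M ≤ c :=
  Real.sSup_le (by rintro _ ⟨μ, hμ, rfl⟩; exact abs_le_of_mem_spectrum_of_sum_abs_le h hμ) hc

namespace Matrix.IsHermitian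

variable {M : Matrix n n ℝ} (hM : M.IsHermitian)
include hM

theorem abs_eigenvalues_le_specRad (i : n) : |hM.eigenvalues i| ≤ specRad M :=
  abs_le_specRad_of_mem_spectrum (hM.eigenvalues_mem_spectrum_real i)

theorem dotProduct_eq_sum_eigenvectorBasis (x y : n → ℝ) :
    x ⬝ᵥ y = ∑ i, (hM.eigenvectorBasis i ⬝ᵥ x) * (hM.eigenvectorBasis i ⬝ᵥ y) := by
  have := hM.eigenvectorBasis.sum_inner_mul_inner (WithLp.toLp 2 x) (WithLp.toLp 2 y)
  simp only [EuclideanSpace.inner_eq_star_dotProduct, star_trivial] at this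
  rw [dotProduct_comm, ← this]
  simp only [dotProduct_comm y]

theorem eigenvectorBasis_dotProduct_mulVec (i : n) (x : n → ℝ) :
    hM.eigenvectorBasis i ⬝ᵥ M *ᵥ x = hM.eigenvalues i * (hM.eigenvectorBasis i ⬝ᵥ x) := by
  rw [dotProduct_mulVec, ← mulVec_transpose, (isHermitian_iff_isSymm.1 hM).eq,
    hM.mulVec_eigenvectorBasis, smul_dotProduct, smul_eq_mul]

theorem abs_dotProduct_mulVec_le (x : n → ℝ) : |x ⬝ᵥ M *ᵥ x| ≤ specRad M * (x ⬝ᵥ x) := by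
  simp only [hM.dotProduct_eq_sum_eigenvectorBasis x, hM.eigenvectorBasis_dotProduct_mulVec,
    Finset.mul_sum]
  refine (Finset.abs_sum_le_sum_abs _ _).trans (Finset.sum_le_sum fun i _ => ?_)
  rw [← mul_assoc, mul_comm _ (hM.eigenvalues i), mul_assoc, abs_mul, abs_mul_self]
  exact mul_le_mul_of_nonneg_right (hM.abs_eigenvalues_le_specRad i) (mul_self_nonneg _)

theorem mulVec_dotProduct_mulVec_le (x : n → ℝ) :
    M *ᵥ x ⬝ᵥ M *ᵥ x ≤ specRad M ^ 2 * (x ⬝ᵥ x) := by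
  simp only [hM.dotProduct_eq_sum_eigenvectorBasis (M *ᵥ x),
    hM.dotProduct_eq_sum_eigenvectorBasis x, hM.eigenvectorBasis_dotProduct_mulVec, Finset.mul_sum]
  refine Finset.sum_le_sum fun i _ => ?_
  have hsq : hM.eigenvalues i ^ 2 ≤ specRad M ^ 2 := by
    rw [← sq_abs]
    exact pow_le_pow_left₀ (abs_nonneg _) (hM.abs_eigenvalues_le_specRad i) 2
  rw [mul_mul_mul_comm, ← sq]
  exact mul_le_mul_of_nonneg_right hsq (mul_self_nonneg _)

theorem specRad_submatrix_le {m : Type*} [Fintype m] [DecidableEq m] {f : m → n}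
    (hf : Function.Injective f) : specRad (M.submatrix f f) ≤ specRad M := by
  have hN := hM.submatrix f
  refine Real.sSup_le ?_ (specRad_nonneg M)
  rintro _ ⟨μ, hμ, rfl⟩
  obtain ⟨i, rfl⟩ := hN.spectrum_real_eq_range_eigenvalues ▸ hμ
  set y : m → ℝ := (hN.eigenvectorBasis i).ofLp
  have hy : y ⬝ᵥ y = 1 := by
    have h := real_inner_self_eq_norm_sq (hN.eigenvectorBasis i)
    rwa [hN.eigenvectorBasis.orthonormal.1 i, one_pow, EuclideanSpace.inner_eq_star_dotProduct,
      star_trivial] at h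
  calc |hN.eigenvalues i| = |y ⬝ᵥ M.submatrix f f *ᵥ y| := by
        rw [hN.eigenvalues_eq i]
        simp [y]
    _ = |Function.extend f y 0 ⬝ᵥ M *ᵥ Function.extend f y 0| := by
        rw [hf.extend_dotProduct_mulVec_extend]
    _ ≤ specRad M * (Function.extend f y 0 ⬝ᵥ Function.extend f y 0) :=
        hM.abs_dotProduct_mulVec_le _
    _ = specRad M := by rw [hf.extend_dotProduct_extend, hy, mul_one]

end Matrix.IsHermitian

end Spectrum

namespace SimpleGraph

variable {V W : Type*}

def IsSignature (G : SimpleGraph V) (σ : V → V → ℝ) : Prop :=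
  ∀ i j, G.Adj i j → (σ i j = 1 ∨ σ i j = -1) ∧ σ i j = σ j i

section Signed

variable {G : SimpleGraph V} {H : SimpleGraph W} {σ : V → V → ℝ}

theorem IsSignature.sq_eq_one (hσ : G.IsSignature σ) {i j : V} (h : G.Adj i j) :
    σ i j ^ 2 = 1 := by
  rcases (hσ i j h).1 with h | h <;> simp [h]

theorem IsSignature.comap (hσ : G.IsSignature σ) (f : H ↪g G) :
    H.IsSignature fun i j => σ (f i) (f j) :=
  fun _ _ h => hσ _ _ (f.map_adj_iff.2 h)

@[simp]
theorem signedAdj_apply (i j : V) : signedAdj G σ i j = if G.Adj i j then σ i j else 0 := rfl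

theorem IsSignature.isHermitian (hσ : G.IsSignature σ) : (signedAdj G σ).IsHermitian := by
  refine Matrix.IsHermitian.ext fun i j => ?_
  by_cases h : G.Adj i j
  · simp [h, h.symm, (hσ i j h).2]
  · have h' : ¬G.Adj j i := fun h' => h h'.symm
    simp [h, h']

theorem signedAdj_submatrix (f : H ↪g G) :
    (signedAdj G σ).submatrix f f = signedAdj H fun i j => σ (f i) (f j) := by
  ext i j
  simp

section Finite

variable [Fintype V] [DecidableEq V]

theorem specRad_signedAdj_comap_le [Fintype W] [DecidableEq W]
    (hM : (signedAdj G σ).IsHermitian) (f : H ↪g G) :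
    specRad (signedAdj H fun i j => σ (f i) (f j)) ≤ specRad (signedAdj G σ) :=
  signedAdj_submatrix f ▸ hM.specRad_submatrix_le f.injective

variable [DecidableRel G.Adj]

theorem specRad_signedAdj_le_of_degree_le (hσ : ∀ i j, G.Adj i j → |σ i j| ≤ 1) {D : ℕ}
    (hD : ∀ v, G.degree v ≤ D) : specRad (signedAdj G σ) ≤ D := by
  refine specRad_le_of_sum_abs_le (Nat.cast_nonneg D) fun i => ?_
  calc ∑ j, |signedAdj G σ i j| ≤ ∑ j, if G.Adj i j then (1 : ℝ) else 0 :=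
        Finset.sum_le_sum fun j _ => by
          by_cases h : G.Adj i j
          · simpa [h] using hσ i j h
          · simp [h]
    _ = G.degree i := by
        rw [Finset.sum_boole, ← card_neighborFinset_eq_degree, neighborFinset_eq_filter]
    _ ≤ D := by exact_mod_cast hD i

theorem IsSignature.degree_le_specRad_sq (hσ : G.IsSignature σ) (v : V) :
    (G.degree v : ℝ) ≤ specRad (signedAdj G σ) ^ 2 := by
  have hcol :
      signedAdj G σ *ᵥ Pi.single v 1 ⬝ᵥ signedAdj G σ *ᵥ Pi.single v 1 = G.degree v := by
    rw [mulVec_single_one, ← card_neighborFinset_eq_degree, neighborFinset_eq_filter,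
      ← Finset.sum_boole]
    refine Finset.sum_congr rfl fun i _ => ?_
    by_cases h : G.Adj i v
    · simp [h, h.symm, ← sq, hσ.sq_eq_one h]
    · have h' : ¬G.Adj v i := fun h' => h h'.symm
      simp [h, h']
  have h := hσ.isHermitian.mulVec_dotProduct_mulVec_le (Pi.single v 1)
  rw [hcol] at h
  simpa using h

theorem two_mul_card_edgeFinset_le_card_mul_specRad (hM : (signedAdj G σ).IsHermitian) {c : V → ℝ}
    (hc : ∀ v, c v ^ 2 = 1) (hbal : ∀ i j, G.Adj i j → c i * σ i j * c j = 1) :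
    2 * (#G.edgeFinset : ℝ) ≤ Fintype.card V * specRad (signedAdj G σ) := by
  have hcc : c ⬝ᵥ c = Fintype.card V := by
    simp [dotProduct, ← sq, hc]
  have hrow : ∀ i, c i * (signedAdj G σ *ᵥ c) i = G.degree i := by
    intro i
    rw [mulVec, dotProduct, Finset.mul_sum, ← card_neighborFinset_eq_degree,
      neighborFinset_eq_filter, ← Finset.sum_boole]
    refine Finset.sum_congr rfl fun j _ => ?_
    by_cases h : G.Adj i j
    · simp only [signedAdj_apply, h, if_true, ← hbal i j h]
      ring
    · simp [h]
  have hcMc : c ⬝ᵥ signedAdj G σ *ᵥ c = 2 * #G.edgeFinset := by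
    simp only [dotProduct, hrow]
    exact_mod_cast G.sum_degrees_eq_twice_card_edges
  have := hM.abs_dotProduct_mulVec_le c
  rw [hcMc, hcc, abs_of_nonneg (by positivity)] at this
  linarith

end Finite

end Signed

theorem finite_setOf_specRad_signedAdj (n : ℕ) :
    {r | ∃ (G : SimpleGraph (Fin n)) (σ : Fin n → Fin n → ℝ),
      G.IsSignature σ ∧ specRad (signedAdj G σ) = r}.Finite := by
  refine ((Set.Finite.pi fun _ => Set.Finite.pi fun _ =>
    Set.toFinite ({-1, 0, 1} : Set ℝ)).image
      (specRad : Matrix (Fin n) (Fin n) ℝ → ℝ)).subset ?_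
  rintro _ ⟨G, σ, hσ, rfl⟩
  refine ⟨signedAdj G σ, fun i _ j _ => ?_, rfl⟩
  by_cases h : G.Adj i j
  · rcases (hσ i j h).1 with h' | h' <;> simp [h, h']
  · simp [h]

section Path

variable {n : ℕ} {σ : Fin n → Fin n → ℝ}

theorem degree_pathGraph_le (i : Fin n) : (pathGraph n).degree i ≤ 2 :=
  calc (pathGraph n).degree i ≤ #({(i : ℕ) + 1, (i : ℕ) - 1} : Finset ℕ) :=
        Finset.card_le_card_of_injOn Fin.val
          (fun j hj => by simp [pathGraph_adj] at hj ⊢; omega) Fin.val_injective.injOn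
    _ ≤ 2 := Finset.card_le_two

theorem card_edgeFinset_pathGraph (n : ℕ) : #(pathGraph (n + 1)).edgeFinset = n := by
  have hE : (pathGraph (n + 1)).edgeFinset =
      Finset.univ.image fun i : Fin n => s(i.castSucc, i.succ) := by
    ext e
    induction e using Sym2.ind with | _ a b => ?_
    simp only [mem_edgeFinset, mem_edgeSet, pathGraph_adj, Finset.mem_image, Finset.mem_univ,
      true_and, Sym2.eq_iff, Fin.ext_iff, Fin.val_castSucc, Fin.val_succ]
    constructor
    · rintro (h | h)
      · exact ⟨⟨a, by omega⟩, by simp [h]⟩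
      · exact ⟨⟨b, by omega⟩, by simp [h]⟩
    · rintro ⟨i, h | h⟩ <;> omega
  rw [hE, Finset.card_image_of_injective _ ?_, Finset.card_univ, Fintype.card_fin]
  intro i j h
  simp only [Sym2.eq_iff, Fin.ext_iff, Fin.val_castSucc, Fin.val_succ] at h
  omega

theorem IsSignature.exists_switching_pathGraph (hσ : (pathGraph n).IsSignature σ) :
    ∃ c : Fin n → ℝ, (∀ i, c i ^ 2 = 1) ∧
      ∀ i j, (pathGraph n).Adj i j → c i * σ i j * c j = 1 := by
  let t : ℕ → ℝ := fun k => if h : k + 1 < n then σ ⟨k, by omega⟩ ⟨k + 1, h⟩ else 1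
  have ht : ∀ k, t k ^ 2 = 1 := by
    intro k
    by_cases h : k + 1 < n
    · simp only [t, dif_pos h]
      exact hσ.sq_eq_one (pathGraph_adj.2 (Or.inl rfl))
    · simp [t, h]
  let c : Fin n → ℝ := fun i => ∏ k ∈ Finset.range i, t k
  have hc : ∀ i, c i ^ 2 = 1 := fun i => by
    simp [c, ← Finset.prod_pow, ht]
  have hstep : ∀ i j : Fin n, (i : ℕ) + 1 = j → c i * σ i j * c j = 1 := by
    intro i j hij
    have htij : t i = σ i j := by
      simp only [t, dif_pos (hij ▸ j.isLt : (i : ℕ) + 1 < n)]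
      congr 1
      exact Fin.ext hij
    have hcj : c j = c i * σ i j := by
      simp only [c, ← hij, Finset.prod_range_succ, htij]
    rw [hcj, show c i * σ i j * (c i * σ i j) = c i ^ 2 * σ i j ^ 2 by ring, hc,
      hσ.sq_eq_one (pathGraph_adj.2 (Or.inl hij)), one_mul]
  refine ⟨c, hc, fun i j h => ?_⟩
  rcases pathGraph_adj.1 h with hij | hji
  · exact hstep i j hij
  · rw [(hσ i j h).2, mul_comm (c i), mul_comm, ← mul_assoc]
    exact hstep j i hji

theorem IsSignature.specRad_signedAdj_pathGraph_le (hσ : (pathGraph n).IsSignature σ) :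
    specRad (signedAdj (pathGraph n) σ) ≤ 2 := by
  exact_mod_cast specRad_signedAdj_le_of_degree_le
    (fun _ _ h => (sq_le_one_iff_abs_le_one _).1 (hσ.sq_eq_one h).le) degree_pathGraph_le

theorem IsSignature.two_sub_two_div_le_specRad_pathGraph (hσ : (pathGraph n).IsSignature σ)
    (hn : n ≠ 0) : 2 - 2 / (n : ℝ) ≤ specRad (signedAdj (pathGraph n) σ) := by
  obtain ⟨c, hc, hbal⟩ := hσ.exists_switching_pathGraph
  have h := two_mul_card_edgeFinset_le_card_mul_specRad hσ.isHermitian hc hbal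
  obtain ⟨L, rfl⟩ := Nat.exists_eq_add_one_of_ne_zero hn
  rw [card_edgeFinset_pathGraph, Fintype.card_fin] at h
  have hL : (0 : ℝ) < L + 1 := by positivity
  push_cast at h ⊢
  rw [show (2 : ℝ) - 2 / (L + 1) = 2 * L / (L + 1) by field_simp; ring, div_le_iff₀ hL]
  linarith

end Path

section Distance

variable {G : SimpleGraph V}

namespace Walk

variable {u v : V} {p : G.Walk u v}

theorem dist_getVert_getVert_of_length_eq_dist (hp : p.length = G.dist u v) {i j : ℕ}
    (hij : i ≤ j) (hj : j ≤ p.length) : G.dist (p.getVert i) (p.getVert j) = j - i := by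
  have h := length_eq_dist_of_subwalk hp (((p.drop i).isSubwalk_take (j - i)).trans
    (p.isSubwalk_drop i))
  rwa [take_length, drop_length, drop_getVert, Nat.add_sub_cancel' hij,
    min_eq_left (by omega), eq_comm] at h

theorem adj_getVert_iff_of_length_eq_dist (hp : p.length = G.dist u v) {i j : ℕ}
    (hi : i ≤ p.length) (hj : j ≤ p.length) :
    G.Adj (p.getVert i) (p.getVert j) ↔ i + 1 = j ∨ j + 1 = i := by
  rw [← dist_eq_one_iff_adj]
  rcases le_total i j with h | h
  · rw [dist_getVert_getVert_of_length_eq_dist hp h hj]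
    omega
  · rw [dist_comm, dist_getVert_getVert_of_length_eq_dist hp h hi]
    omega

end Walk

theorem Reachable.nonempty_pathGraph_embedding {u v : V} (huv : G.Reachable u v) {L : ℕ}
    (hL : L ≤ G.dist u v) : Nonempty (pathGraph (L + 1) ↪g G) := by
  obtain ⟨p, hp⟩ := huv.exists_walk_length_eq_dist
  have hle : ∀ i : Fin (L + 1), (i : ℕ) ≤ p.length := fun i => by omega
  refine ⟨⟨⟨fun i => p.getVert i, fun i j h => ?_⟩, fun {i j} => ?_⟩⟩
  · exact Fin.ext ((p.isPath_of_length_eq_dist hp).getVert_injOn (hle i) (hle j) h)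
  · simp only [pathGraph_adj]
    exact p.adj_getVert_iff_of_length_eq_dist hp (hle i) (hle j)

variable [Fintype V] [DecidableEq V] [DecidableRel G.Adj]

theorem Connected.card_filter_dist_le_le_pow (hG : G.Connected) {D : ℕ} (hD : ∀ v, G.degree v ≤ D)
    (u : V) (r : ℕ) : #{v | G.dist u v ≤ r} ≤ (D + 1) ^ r := by
  induction r with
  | zero =>
    refine Finset.card_le_one.2 fun a ha b hb => ?_
    simp only [Finset.mem_filter, Finset.mem_univ, true_and, nonpos_iff_eq_zero,
      hG.dist_eq_zero_iff] at ha hb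
    exact ha.symm.trans hb
  | succ r ih =>
    have hsub : ({v | G.dist u v ≤ r + 1} : Finset V) ⊆
        ({v | G.dist u v ≤ r} : Finset V).biUnion fun w => insert w (G.neighborFinset w) := by
      intro v hv
      simp only [Finset.mem_filter, Finset.mem_univ, true_and] at hv
      simp only [Finset.mem_biUnion, Finset.mem_filter, Finset.mem_univ, true_and,
        Finset.mem_insert, mem_neighborFinset]
      obtain hle | heq := Nat.le_succ_iff.1 hv
      · exact ⟨v, hle, Or.inl rfl⟩
      · obtain ⟨p, hp⟩ := hG.exists_walk_length_eq_dist u v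
        refine ⟨p.getVert r, ?_, Or.inr ?_⟩
        · simpa [hp, heq] using dist_le (p.take r)
        · simpa [p.getVert_of_length_le (hp.trans heq).le] using
            p.adj_getVert_succ (i := r) (by omega)
    calc #{v | G.dist u v ≤ r + 1}
        ≤ ∑ w ∈ {v | G.dist u v ≤ r}, #(insert w (G.neighborFinset w)) :=
          (Finset.card_le_card hsub).trans Finset.card_biUnion_le
      _ ≤ ∑ w ∈ {v | G.dist u v ≤ r}, (D + 1) :=
          Finset.sum_le_sum fun w _ => (Finset.card_insert_le _ _).trans (by simpa using hD w)
      _ ≤ (D + 1) ^ (r + 1) := by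
          rw [Finset.sum_const, smul_eq_mul, pow_succ]
          exact Nat.mul_le_mul_right _ ih

theorem Connected.nonempty_pathGraph_embedding (hG : G.Connected) {D L : ℕ}
    (hD : ∀ v, G.degree v ≤ D) (hcard : (D + 1) ^ L < Fintype.card V) :
    Nonempty (pathGraph (L + 1) ↪g G) := by
  obtain ⟨u⟩ := hG.nonempty
  obtain ⟨v, hv⟩ : ∃ v, L ≤ G.dist u v := by
    by_contra! h
    have := (hG.card_filter_dist_le_le_pow hD u L).trans_lt hcard
    simp [fun v => (h v).le] at this
  exact (hG u v).nonempty_pathGraph_embedding hv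

end Distance

end SimpleGraph

open SimpleGraph

theorem tendsto_two_sub_two_div_atTop : Tendsto (fun n : ℕ => 2 - 2 / (n : ℝ)) atTop (𝓝 2) := by
  simpa using tendsto_const_nhds.sub (tendsto_const_div_atTop_nhds_zero_nat (2 : ℝ))

theorem tendsto_specRad_signedAdj_pathGraph (σ : (n : ℕ) → Fin n → Fin n → ℝ)
    (hσ : ∀ n, (pathGraph n).IsSignature (σ n)) :
    Tendsto (fun n => specRad (signedAdj (pathGraph n) (σ n))) atTop (𝓝 2) :=
  tendsto_of_tendsto_of_tendsto_of_le_of_le' tendsto_two_sub_two_div_atTop tendsto_const_nhds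
    ((eventually_ne_atTop 0).mono fun n hn => (hσ n).two_sub_two_div_le_specRad_pathGraph hn)
    (Eventually.of_forall fun n => (hσ n).specRad_signedAdj_pathGraph_le)

section Sequence

variable {m : ℕ → ℕ} {G : ∀ k, SimpleGraph (Fin (m k))} {σ : ∀ k, Fin (m k) → Fin (m k) → ℝ}

theorem tendsto_atTop_of_injective_specRad (hσ : ∀ k, (G k).IsSignature (σ k))
    (hinj : Function.Injective fun k => specRad (signedAdj (G k) (σ k))) :
    Tendsto m atTop atTop := by
  refine tendsto_atTop.2 fun N => ?_
  have hfin : {k | m k < N}.Finite := by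
    refine (((Set.finite_lt_nat N).biUnion fun n _ => finite_setOf_specRad_signedAdj n).preimage
      hinj.injOn).subset fun k hk => ?_
    simp only [Set.mem_preimage, Set.mem_iUnion]
    exact ⟨m k, hk, G k, σ k, hσ k, rfl⟩
  simpa [Nat.cofinite_eq_atTop] using hfin.eventually_cofinite_notMem

theorem two_le_of_tendsto_specRad (hG : ∀ k, (G k).Connected)
    (hσ : ∀ k, (G k).IsSignature (σ k))
    (hinj : Function.Injective fun k => specRad (signedAdj (G k) (σ k))) {γ : ℝ}
    (hγ : Tendsto (fun k => specRad (signedAdj (G k) (σ k))) atTop (𝓝 γ)) : 2 ≤ γ := by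
  set D := ⌈(γ + 1) ^ 2⌉₊
  have hdeg : ∀ᶠ k in atTop, ∀ v, (G k).degree v ≤ D := by
    filter_upwards [hγ.eventually_lt_const (lt_add_one γ)] with k hk v
    have h := ((hσ k).degree_le_specRad_sq v).trans
      ((pow_le_pow_left₀ (specRad_nonneg _) hk.le 2).trans (Nat.le_ceil _))
    exact_mod_cast h
  have hpath : ∀ n : ℕ, n ≠ 0 → 2 - 2 / (n : ℝ) ≤ γ := by
    intro n hn
    obtain ⟨L, rfl⟩ := Nat.exists_eq_add_one_of_ne_zero hn
    refine ge_of_tendsto hγ ?_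
    filter_upwards [hdeg, (tendsto_atTop_of_injective_specRad hσ hinj).eventually_gt_atTop
      ((D + 1) ^ L)] with k hk hmk
    obtain ⟨f⟩ := (hG k).nonempty_pathGraph_embedding hk (by rwa [Fintype.card_fin])
    exact (((hσ k).comap f).two_sub_two_div_le_specRad_pathGraph hn).trans
      (specRad_signedAdj_comap_le (hσ k).isHermitian f)
  exact le_of_tendsto tendsto_two_sub_two_div_atTop ((eventually_ne_atTop 0).mono hpath)

end Sequence

theorem stmt12 :
    -- (a) `2` is a limit point of signed spectral radii, witnessed by the paths
    -- `P_n` with any choice of signatures.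
    (∀ σ : (n : ℕ) → Fin n → Fin n → ℝ,
      (∀ n i j, (SimpleGraph.pathGraph n).Adj i j →
          (σ n i j = 1 ∨ σ n i j = -1) ∧ σ n i j = σ n j i) →
      Filter.Tendsto
        (fun n : ℕ => specRad (signedAdj (SimpleGraph.pathGraph n) (σ n)))
        Filter.atTop (nhds 2)) ∧
    -- (b) no sequence of connected signed graphs with pairwise distinct spectral
    -- radii can converge to a value `γ ≤ 2` unless `γ = 2`.
    (∀ (m : ℕ → ℕ) (G : ∀ k, SimpleGraph (Fin (m k)))
        (σ : ∀ k, Fin (m k) → Fin (m k) → ℝ) (γ : ℝ),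
      (∀ k, (G k).Connected) →
      (∀ k i j, (G k).Adj i j → (σ k i j = 1 ∨ σ k i j = -1) ∧ σ k i j = σ k j i) →
      Function.Injective (fun k => specRad (signedAdj (G k) (σ k))) →
      Filter.Tendsto (fun k => specRad (signedAdj (G k) (σ k)))
        Filter.atTop (nhds γ) →
      γ ≤ 2 → γ = 2) :=
  ⟨tendsto_specRad_signedAdj_pathGraph,
    fun _ _ _ _ hG hσ hinj hγ hγ₂ => le_antisymm hγ₂ (two_le_of_tendsto_specRad hG hσ hinj hγ)⟩
end

section
/- Let G be a finite simple graph that is a forest, and let σ̃ be any orientation of its edges, giving the skew-adjacency matrix S(G, σ̃). Then the spectrum of S(G, σ̃) equals i times the spectrum of the adjacency matrix A(G); in particular the skew spectral radius of any oriented forest equals the adjacency spectral radius of the underlying forest. -/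
open SimpleGraph Matrix Filter
open scoped Classical

/-- Spectral radius of a complex matrix. -/
noncomputable def specRadC {V : Type*} [Fintype V] [DecidableEq V]
    (M : Matrix V V ℂ) : ℝ :=
  sSup ((fun z : ℂ => ‖z‖) '' spectrum ℂ M)

/-!
On a forest every edge weighting `w` with `w i j * w j i = 1` is a coboundary: if `f v` is the
product of `w` along the unique path from a fixed root of the component of `v` to `v`, then
`f j = f i * w i j` on every edge. For `w i j = -I * σ i j` the diagonal matrix `U = diag f`
satisfies `U⁻¹ (I • A) U = S`, so `S` has the spectrum of `I • A`.
-/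

namespace SimpleGraph

variable {V M : Type*} {G : SimpleGraph V}

theorem IsAcyclic.concat_or_concat (hG : G.IsAcyclic) {r i j : V} (p : G.Path r i)
    (q : G.Path r j) (h : G.Adj i j) :
    q.val = p.val.concat h ∨ p.val = q.val.concat h.symm := by
  by_cases hj : j ∈ p.val.support
  · right
    have hdrop : p.val.dropUntil j hj = (Path.singleton h.symm).val :=
      congrArg Subtype.val
        ((hG.subsingleton_path _ _).elim ⟨_, p.2.dropUntil hj⟩ (Path.singleton h.symm))
    have htake : p.val.takeUntil j hj = q.val :=
      congrArg Subtype.val ((hG.subsingleton_path _ _).elim ⟨_, p.2.takeUntil hj⟩ q)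
    rw [← p.val.take_spec hj, hdrop, htake, Walk.concat_eq_append]
    rfl
  · left
    exact congrArg Subtype.val ((hG.subsingleton_path _ _).elim q ⟨_, p.2.concat hj h⟩)

variable [Monoid M]

namespace Walk

def dartProd (w : V → V → M) {a b : V} (p : G.Walk a b) : M :=
  (p.darts.map fun d => w d.fst d.snd).prod

theorem dartProd_concat (w : V → V → M) {a b c : V} (p : G.Walk a b) (h : G.Adj b c) :
    (p.concat h).dartProd w = p.dartProd w * w b c := by
  simp [dartProd, darts_concat]

theorem isUnit_dartProd {w : V → V → M} (hw : ∀ i j, G.Adj i j → w i j * w j i = 1)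
    {a b : V} (p : G.Walk a b) : IsUnit (p.dartProd w) :=
  List.prod_isUnit fun _ hm ↦ by
    obtain ⟨d, -, rfl⟩ := List.mem_map.mp hm
    exact ⟨⟨_, _, hw _ _ d.adj, hw _ _ d.adj.symm⟩, rfl⟩

end Walk

theorem IsAcyclic.exists_potential (hG : G.IsAcyclic) (w : V → V → M)
    (hw : ∀ i j, G.Adj i j → w i j * w j i = 1) :
    ∃ f : V → Mˣ, ∀ i j, G.Adj i j → (f j : M) = f i * w i j := by
  have hroot (v : V) : G.Reachable (G.connectedComponentMk v).out v :=
    ConnectedComponent.exact (Quot.out_eq _)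
  let P (v : V) : G.Path _ v := (hroot v).some.toPath
  have hP {v r : V} (hr : (G.connectedComponentMk v).out = r) (Q : G.Path r v) :
      (P v).val.dartProd w = Q.val.dartProd w := by
    subst hr
    rw [(hG.subsingleton_path _ _).elim (P v) Q]
  refine ⟨fun v ↦ (Walk.isUnit_dartProd hw (P v).val).unit, fun i j h ↦ ?_⟩
  have hcomp : (G.connectedComponentMk j).out = (G.connectedComponentMk i).out := by
    rw [ConnectedComponent.sound h.symm.reachable]
  let q := ((hroot i).trans h.reachable).some.toPath
  simp only [IsUnit.unit_spec]
  rw [hP hcomp q]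
  rcases hG.concat_or_concat (P i) q h with hq | hp
  · rw [hq, Walk.dartProd_concat]
  · rw [hp, Walk.dartProd_concat, mul_assoc, hw j i h.symm, mul_one]

end SimpleGraph

theorem Matrix.spectrum_diagonal_inv_mul_mul_diagonal {R V : Type*} [CommRing R] [Fintype V]
    [DecidableEq V] (d : V → Rˣ) (A : Matrix V V R) :
    spectrum R (diagonal (fun v ↦ (↑(d v)⁻¹ : R)) * A * diagonal (fun v ↦ (d v : R))) =
      spectrum R A :=
  spectrum.units_conjugate'
    (u := ⟨diagonal (fun v ↦ (d v : R)), diagonal (fun v ↦ (↑(d v)⁻¹ : R)),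
      by simp, by simp⟩)

theorem signedAdj_map_eq_diagonal_conj {V : Type*} [Fintype V] [DecidableEq V]
    (G : SimpleGraph V) (σ : V → V → ℝ) (d : V → ℂˣ)
    (hd : ∀ i j, G.Adj i j → (d j : ℂ) = d i * (-Complex.I * σ i j)) :
    (signedAdj G σ).map Complex.ofReal =
      diagonal (fun v ↦ (↑(d v)⁻¹ : ℂ)) * (Complex.I • G.adjMatrix ℂ) *
        diagonal (fun v ↦ (d v : ℂ)) := by
  ext i j
  simp only [map_apply, signedAdj, of_apply, diagonal_mul, mul_diagonal, Matrix.smul_apply,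
    adjMatrix_apply, smul_eq_mul]
  by_cases h : G.Adj i j
  · simp only [h, if_true, hd i j h]
    linear_combination (Complex.I * Complex.I * σ i j) * Units.inv_mul (d i) +
      (σ i j : ℂ) * Complex.I_mul_I
  · simp [h]

theorem stmt14 {V : Type*} [Fintype V] [DecidableEq V]
    (G : SimpleGraph V) (hG : G.IsAcyclic) (σ : V → V → ℝ)
    (hsign : ∀ i j, G.Adj i j → σ i j = 1 ∨ σ i j = -1)
    (hskew : ∀ i j, σ i j = -σ j i) :
    spectrum ℂ ((signedAdj G σ).map (Complex.ofReal))
        = (fun z => Complex.I * z) '' spectrum ℂ (G.adjMatrix ℂ) ∧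
    specRadC ((signedAdj G σ).map (Complex.ofReal))
        = specRadC (G.adjMatrix ℂ) := by
  obtain ⟨d, hd⟩ := hG.exists_potential (fun i j ↦ -Complex.I * σ i j) fun i j h ↦ by
    have hσ : (σ i j : ℂ) ^ 2 = 1 := by rcases hsign i j h with h | h <;> simp [h]
    rw [hskew j i]
    push_cast
    linear_combination hσ - (σ i j : ℂ) ^ 2 * Complex.I_mul_I
  have hspec : spectrum ℂ ((signedAdj G σ).map Complex.ofReal) =
      (fun z ↦ Complex.I * z) '' spectrum ℂ (G.adjMatrix ℂ) := by
    rw [signedAdj_map_eq_diagonal_conj G σ d hd, spectrum_diagonal_inv_mul_mul_diagonal,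
      ← Units.val_mk0 Complex.I_ne_zero, ← Units.smul_def, spectrum.unit_smul_eq_smul,
      ← Set.image_smul]
    rfl
  refine ⟨hspec, ?_⟩
  simp only [specRadC, hspec, Set.image_image, norm_mul, Complex.norm_I, one_mul]
end

section
/- Let G' = G₁u:vG₂ be the graph obtained from vertex-disjoint graphs G₁, G₂ by adding an edge between u ∈ V(G₁) and v ∈ V(G₂). For α ∈ [0,1], the A_α-characteristic polynomials satisfy φ(G') = φ(G₁)φ(G₂) − αφ(G₁)_u φ(G₂) − αφ(G₁)φ(G₂)_v + (2α−1)φ(G₁)_u φ(G₂)_v, where φ(H) = det(λI − A_α(H)) and φ(H)_w denotes the characteristic polynomial of the principal submatrix of A_α(H) obtained by deleting the row and column of w — with the convention that in G' the degrees of u and v are each increased by 1. -/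
open SimpleGraph Matrix Filter
open scoped Classical

/-- The graph `G₁ u:v G₂`: disjoint union of `G₁` and `G₂` plus the edge `uv`. -/
def joinGraph {V₁ V₂ : Type*} (G₁ : SimpleGraph V₁) (G₂ : SimpleGraph V₂)
    (u : V₁) (v : V₂) : SimpleGraph (V₁ ⊕ V₂) where
  Adj x y :=
    match x, y with
    | Sum.inl a, Sum.inl b => G₁.Adj a b
    | Sum.inr a, Sum.inr b => G₂.Adj a b
    | Sum.inl a, Sum.inr b => a = u ∧ b = v
    | Sum.inr b, Sum.inl a => a = u ∧ b = v
  symm := by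
    constructor
    rintro (a | a) (b | b) h
    · exact G₁.adj_symm h
    · exact h
    · exact h
    · exact G₂.adj_symm h
  loopless := by
    constructor
    rintro (a | a) h
    · exact G₁.irrefl h
    · exact G₂.irrefl h

/-- The principal submatrix of `A_α(G)` deleting the row/column of `w`. -/
noncomputable def AalphaDel {V : Type*} [Fintype V] [DecidableEq V]
    (G : SimpleGraph V) (α : ℝ) (w : V) : Matrix {x : V // x ≠ w} {x : V // x ≠ w} ℝ :=
  (Aalpha G α).submatrix Subtype.val Subtype.val

/-!
`λI - A_α(G')` differs from the block-diagonal matrix `diag(λI - A_α(G₁), λI - A_α(G₂))` only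
in the principal `2 × 2` block at `u, v`, by `-[[α, 1 - α], [1 - α, α]]`. Expanding the
determinant multilinearly in these two rows leaves determinants of block-diagonal matrices whose
`u`- and/or `v`-rows are replaced by unit vectors. Replacing row `w` by `e_w` deletes `w`, while
putting `e_v` into row `u` (or `e_u` into row `v`) makes a diagonal block singular. The term with
both rows replaced carries the `2 × 2` determinant `α² - (1 - α)² = 2α - 1`.
-/

namespace Matrix

section Semiring

variable {R : Type*} [Semiring R] {n : Type*} [DecidableEq n]

theorem add_single_pair_eq_updateRow (M : Matrix n n R) {p q : n} (hpq : p ≠ q) (a b c d : R) :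
    M + single p p a + single p q b + single q p c + single q q d
      = (M.updateRow p (M p + a • Pi.single p 1 + b • Pi.single q 1)).updateRow q
          (M q + c • Pi.single p 1 + d • Pi.single q 1) := by
  ext k l
  simp only [add_apply, single_apply, updateRow_apply, Pi.add_apply, Pi.smul_apply,
    Pi.single_apply, smul_eq_mul]
  split_ifs <;> grind

end Semiring

variable {R : Type*} [CommRing R]

section Rows

variable {n : Type*} [Fintype n] [DecidableEq n]

theorem det_updateRow_single_self (M : Matrix n n R) (i : n) :
    (M.updateRow i (Pi.single i 1)).det = (M.submatrix ((↑) : {j // j ≠ i} → n) (↑)).det := by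
  set N := M.updateRow i (Pi.single i 1)
  rw [← det_submatrix_equiv_self (Equiv.sumCompl (· = i)) N,
    ← fromBlocks_toBlocks (N.submatrix _ _)]
  have hoff : (N.submatrix (Equiv.sumCompl (· = i)) (Equiv.sumCompl (· = i))).toBlocks₁₂ = 0 := by
    ext ⟨a, rfl⟩ ⟨b, hb⟩
    simp [N, toBlocks₁₂, Ne.symm hb]
  have hcorner : (N.submatrix (Equiv.sumCompl (· = i)) (Equiv.sumCompl (· = i))).toBlocks₂₂
      = M.submatrix (↑) (↑) := by
    ext ⟨a, ha⟩ ⟨b, hb⟩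
    simp [N, toBlocks₂₂, updateRow_ne ha]
  rw [hoff, det_fromBlocks_zero₁₂, det_unique, hcorner]
  simp [N, toBlocks₁₁, (default : {a // a = i}).prop]

theorem det_updateRow_zero (M : Matrix n n R) (i : n) : (M.updateRow i 0).det = 0 :=
  det_eq_zero_of_row_eq_zero i (by simp)

theorem det_updateRow_add_smul_add_smul (M : Matrix n n R) (i : n) (a b : R) (x y : n → R) :
    (M.updateRow i (M i + a • x + b • y)).det
      = M.det + a * (M.updateRow i x).det + b * (M.updateRow i y).det := by
  rw [det_updateRow_add, det_updateRow_add, det_updateRow_smul, det_updateRow_smul,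
    updateRow_eq_self]

theorem det_updateRow_updateRow_same (M : Matrix n n R) {i j : n} (hij : i ≠ j) (x : n → R) :
    ((M.updateRow i x).updateRow j x).det = 0 :=
  det_zero_of_row_eq hij (by simp [updateRow_ne hij])

theorem det_updateRow_updateRow_swap (M : Matrix n n R) {i j : n} (hij : i ≠ j) (x y : n → R) :
    ((M.updateRow i x).updateRow j y).det = -((M.updateRow i y).updateRow j x).det := by
  have hswap : ((M.updateRow i y).updateRow j x).submatrix (Equiv.swap i j) id
      = (M.updateRow i x).updateRow j y := by
    ext k l
    rcases eq_or_ne k i with rfl | hki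
    · simp [updateRow_ne hij]
    rcases eq_or_ne k j with rfl | hkj
    · simp [updateRow_ne hij]
    · simp [Equiv.swap_apply_of_ne_of_ne hki hkj, updateRow_ne hki, updateRow_ne hkj]
  rw [← hswap, det_permute, Equiv.Perm.sign_swap hij]
  simp

theorem det_add_single_pair (M : Matrix n n R) {p q : n} (hpq : p ≠ q) (a b c d : R) :
    (M + single p p a + single p q b + single q p c + single q q d).det
      = M.det + a * (M.updateRow p (Pi.single p 1)).det + b * (M.updateRow p (Pi.single q 1)).det
        + c * (M.updateRow q (Pi.single p 1)).det + d * (M.updateRow q (Pi.single q 1)).det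
        + (a * d - b * c) * ((M.updateRow p (Pi.single p 1)).updateRow q (Pi.single q 1)).det := by
  set M' := M.updateRow p (M p + a • Pi.single p 1 + b • Pi.single q 1)
  have hM' : (M'.updateRow q (M q + c • Pi.single p 1 + d • Pi.single q 1)).det
      = M'.det + c * (M'.updateRow q (Pi.single p 1)).det
        + d * (M'.updateRow q (Pi.single q 1)).det := by
    rw [← updateRow_ne (M := M) (b := M p + a • Pi.single p 1 + b • Pi.single q 1) hpq.symm,
      det_updateRow_add_smul_add_smul]
  have hrow (x : n → R) : (M'.updateRow q x).det = (M.updateRow q x).det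
      + a * ((M.updateRow q x).updateRow p (Pi.single p 1)).det
      + b * ((M.updateRow q x).updateRow p (Pi.single q 1)).det := by
    rw [updateRow_comm _ hpq, ← updateRow_ne (M := M) (b := x) hpq,
      det_updateRow_add_smul_add_smul]
  have hM : M'.det = M.det + a * (M.updateRow p (Pi.single p 1)).det
      + b * (M.updateRow p (Pi.single q 1)).det := det_updateRow_add_smul_add_smul ..
  have hswap : ((M.updateRow q (Pi.single p 1)).updateRow p (Pi.single q 1)).det
      = -((M.updateRow p (Pi.single p 1)).updateRow q (Pi.single q 1)).det := by
    rw [det_updateRow_updateRow_swap _ hpq.symm, updateRow_comm _ hpq.symm]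
  rw [add_single_pair_eq_updateRow M hpq, hM', hM, hrow, hrow, hswap,
    det_updateRow_updateRow_same _ hpq.symm, det_updateRow_updateRow_same _ hpq.symm,
    updateRow_comm _ hpq.symm]
  ring

end Rows

section Blocks

variable {l m n o : Type*}

theorem fromBlocks_updateRow_inl [DecidableEq m] [DecidableEq n] {α : Type*}
    (A : Matrix m l α) (B : Matrix m o α) (C : Matrix n l α) (D : Matrix n o α)
    (i : m) (r : l → α) (s : o → α) :
    (fromBlocks A B C D).updateRow (Sum.inl i) (Sum.elim r s)
      = fromBlocks (A.updateRow i r) (B.updateRow i s) C D := by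
  ext (a | a) (b | b) <;> simp [updateRow_apply]

theorem fromBlocks_updateRow_inr [DecidableEq m] [DecidableEq n] {α : Type*}
    (A : Matrix m l α) (B : Matrix m o α) (C : Matrix n l α) (D : Matrix n o α)
    (j : n) (r : l → α) (s : o → α) :
    (fromBlocks A B C D).updateRow (Sum.inr j) (Sum.elim r s)
      = fromBlocks A B (C.updateRow j r) (D.updateRow j s) := by
  ext (a | a) (b | b) <;> simp [updateRow_apply]

end Blocks

end Matrix

section JoinGraph

variable {V₁ V₂ : Type*} (G₁ : SimpleGraph V₁) (G₂ : SimpleGraph V₂) (u : V₁) (v : V₂)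

@[simp] theorem joinGraph_adj_inl_inl (a b : V₁) :
    (joinGraph G₁ G₂ u v).Adj (Sum.inl a) (Sum.inl b) ↔ G₁.Adj a b := Iff.rfl

@[simp] theorem joinGraph_adj_inr_inr (a b : V₂) :
    (joinGraph G₁ G₂ u v).Adj (Sum.inr a) (Sum.inr b) ↔ G₂.Adj a b := Iff.rfl

@[simp] theorem joinGraph_adj_inl_inr (a : V₁) (b : V₂) :
    (joinGraph G₁ G₂ u v).Adj (Sum.inl a) (Sum.inr b) ↔ a = u ∧ b = v := Iff.rfl

@[simp] theorem joinGraph_adj_inr_inl (b : V₂) (a : V₁) :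
    (joinGraph G₁ G₂ u v).Adj (Sum.inr b) (Sum.inl a) ↔ a = u ∧ b = v := Iff.rfl

variable [Fintype V₁] [Fintype V₂]

theorem joinGraph_degree_inl (a : V₁) :
    (joinGraph G₁ G₂ u v).degree (Sum.inl a) = G₁.degree a + if a = u then 1 else 0 := by
  simp only [← card_neighborFinset_eq_degree, neighborFinset_eq_filter, Finset.card_filter,
    Fintype.sum_sum_type]
  simp [ite_and]

theorem joinGraph_degree_inr (b : V₂) :
    (joinGraph G₁ G₂ u v).degree (Sum.inr b) = G₂.degree b + if b = v then 1 else 0 := by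
  simp only [← card_neighborFinset_eq_degree, neighborFinset_eq_filter, Finset.card_filter,
    Fintype.sum_sum_type]
  simp [ite_and, add_comm]

variable [DecidableEq V₁] [DecidableEq V₂]

theorem Aalpha_joinGraph (α : ℝ) :
    Aalpha (joinGraph G₁ G₂ u v) α
      = fromBlocks (Aalpha G₁ α) 0 0 (Aalpha G₂ α) + single (Sum.inl u) (Sum.inl u) α
        + single (Sum.inl u) (Sum.inr v) (1 - α) + single (Sum.inr v) (Sum.inl u) (1 - α)
        + single (Sum.inr v) (Sum.inr v) α := by
  ext (a | a) (b | b) <;>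
    simp only [Aalpha, Matrix.add_apply, Matrix.smul_apply, Matrix.zero_apply, smul_eq_mul,
      single_apply, diagonal_apply, adjMatrix_apply, joinGraph_degree_inl, joinGraph_degree_inr,
      fromBlocks_apply₁₁, fromBlocks_apply₁₂, fromBlocks_apply₂₁, fromBlocks_apply₂₂,
      joinGraph_adj_inl_inl, joinGraph_adj_inl_inr, joinGraph_adj_inr_inl, joinGraph_adj_inr_inr,
      Sum.inl.injEq, Sum.inr.injEq, reduceCtorEq, false_and, and_false, if_false]
  all_goals split_ifs <;> grind

theorem smul_one_sub_Aalpha_joinGraph (α lam : ℝ) :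
    lam • 1 - Aalpha (joinGraph G₁ G₂ u v) α
      = fromBlocks (lam • 1 - Aalpha G₁ α) 0 0 (lam • 1 - Aalpha G₂ α)
        + single (Sum.inl u) (Sum.inl u) (-α) + single (Sum.inl u) (Sum.inr v) (-(1 - α))
        + single (Sum.inr v) (Sum.inl u) (-(1 - α)) + single (Sum.inr v) (Sum.inr v) (-α) := by
  rw [Aalpha_joinGraph, ← fromBlocks_one, fromBlocks_smul]
  ext (a | a) (b | b) <;> simp [single_apply] <;> split_ifs <;> ring

end JoinGraph

theorem det_sub_AalphaDel {V : Type*} [Fintype V] [DecidableEq V] (G : SimpleGraph V)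
    (α lam : ℝ) (w : V) :
    (lam • 1 - AalphaDel G α w).det
      = ((lam • 1 - Aalpha G α).updateRow w (Pi.single w 1)).det := by
  rw [det_updateRow_single_self]
  congr 1
  ext ⟨i, hi⟩ ⟨j, hj⟩
  simp [AalphaDel, one_apply]

theorem stmt16_general {V₁ V₂ : Type*} [Fintype V₁] [DecidableEq V₁] [Fintype V₂] [DecidableEq V₂]
    (G₁ : SimpleGraph V₁) (G₂ : SimpleGraph V₂) (u : V₁) (v : V₂)
    (α : ℝ) :
    ∀ lam : ℝ,
      (lam • (1 : Matrix (V₁ ⊕ V₂) (V₁ ⊕ V₂) ℝ) - Aalpha (joinGraph G₁ G₂ u v) α).det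
        = (lam • 1 - Aalpha G₁ α).det * (lam • 1 - Aalpha G₂ α).det
          - α * (lam • 1 - AalphaDel G₁ α u).det * (lam • 1 - Aalpha G₂ α).det
          - α * (lam • 1 - Aalpha G₁ α).det * (lam • 1 - AalphaDel G₂ α v).det
          + (2*α - 1) * (lam • 1 - AalphaDel G₁ α u).det
              * (lam • 1 - AalphaDel G₂ α v).det := by
  intro lam
  rw [smul_one_sub_Aalpha_joinGraph, det_add_single_pair _ Sum.inl_ne_inr, det_sub_AalphaDel,
    det_sub_AalphaDel, ← Sum.elim_single_zero, ← Sum.elim_zero_single]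
  simp only [fromBlocks_updateRow_inl, fromBlocks_updateRow_inr, updateRow_zero_zero,
    det_fromBlocks_zero₂₁, det_fromBlocks_zero₁₂, det_updateRow_zero]
  ring

theorem stmt16 {V₁ V₂ : Type*} [Fintype V₁] [DecidableEq V₁] [Fintype V₂] [DecidableEq V₂]
    (G₁ : SimpleGraph V₁) (G₂ : SimpleGraph V₂) (u : V₁) (v : V₂)
    (α : ℝ) (hα : α ∈ Set.Icc (0:ℝ) 1) :
    ∀ lam : ℝ,
      (lam • (1 : Matrix (V₁ ⊕ V₂) (V₁ ⊕ V₂) ℝ) - Aalpha (joinGraph G₁ G₂ u v) α).det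
        = (lam • 1 - Aalpha G₁ α).det * (lam • 1 - Aalpha G₂ α).det
          - α * (lam • 1 - AalphaDel G₁ α u).det * (lam • 1 - Aalpha G₂ α).det
          - α * (lam • 1 - Aalpha G₁ α).det * (lam • 1 - AalphaDel G₂ α v).det
          + (2*α - 1) * (lam • 1 - AalphaDel G₁ α u).det
              * (lam • 1 - AalphaDel G₂ α v).det :=
  stmt16_general G₁ G₂ u v α
end
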